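/- arXiv:1611.07830 — 5 statements merged into one kernel-verified Lean document; each statement's English description precedes it below -/
import Mathlib

section
/- For a real structure σ on ℂl(V), the following are equivalent: (1) σ is admissible, i.e., commutes with c; (2) the subspace V_σ is stable under c; (3) the subspace V is stable under σ; (4) σ restricts to a Q-orthogonal involutive linear symmetry of V; (5) the subspaces V₊ := V ∩ V_σ and V₋ := V ∩ iV_σ form a Q-orthogonal direct sum decomposition V = V₊ ⊕ V₋. -/
noncomputable section

open TensorProduct

variable {V : Type*} [AddCommGroup V] [Module ℝ V]

/-- `ℂl(V)`: the complexified Clifford algebra of `(V, Q)` (convention `v² = Q(v)·1`). -/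
abbrev CCl (Q : QuadraticForm ℝ V) := CliffordAlgebra (Q.baseChange ℂ)

/-- The canonical embedding of the real vector space `V` into `ℂl(V)`. -/
def ιr (Q : QuadraticForm ℝ V) (v : V) : CCl Q :=
  CliffordAlgebra.ι (Q.baseChange ℂ) ((1 : ℂ) ⊗ₜ[ℝ] v)

/-- `V^ℂ`: the complexification of `V`, sitting inside `ℂl(V)`. -/
def VC (Q : QuadraticForm ℝ V) : Submodule ℂ (CCl Q) :=
  LinearMap.range (CliffordAlgebra.ι (Q.baseChange ℂ))

/-- A real structure on `ℂl(V)`: an involutive conjugate-linear algebra automorphism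
stabilizing `V^ℂ`. -/
structure RealStructure (Q : QuadraticForm ℝ V) where
  toFun : CCl Q → CCl Q
  map_add' : ∀ x y, toFun (x + y) = toFun x + toFun y
  map_mul' : ∀ x y, toFun (x * y) = toFun x * toFun y
  map_smul' : ∀ (z : ℂ) (x : CCl Q), toFun (z • x) = (starRingEnd ℂ z) • toFun x
  map_one' : toFun 1 = 1
  invol : ∀ x, toFun (toFun x) = x
  stable : ∀ x ∈ VC Q, toFun x ∈ VC Q

namespace RealStructure

theorem map_zero' {Q : QuadraticForm ℝ V} (σ : RealStructure Q) : σ.toFun 0 = 0 := by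
  have h := σ.map_smul' 0 0
  simpa using h

end RealStructure

/-- The fixed points of a real structure, as a real submodule of `ℂl(V)`. -/
def fixedPoints {Q : QuadraticForm ℝ V} (σ : RealStructure Q) : Submodule ℝ (CCl Q) where
  carrier := {x | σ.toFun x = x}
  add_mem' := by
    intro a b ha hb
    simp only [Set.mem_setOf_eq] at *
    rw [σ.map_add', ha, hb]
  zero_mem' := σ.map_zero'
  smul_mem' := by
    intro r x hx
    simp only [Set.mem_setOf_eq] at *
    rw [← Complex.coe_smul, σ.map_smul', hx]
    simp [Complex.conj_ofReal]

/-- `V_σ = {w ∈ V^ℂ : σ(w) = w}`, as a real submodule of `ℂl(V)`. -/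
def VFix {Q : QuadraticForm ℝ V} (σ : RealStructure Q) : Submodule ℝ (CCl Q) :=
  (VC Q).restrictScalars ℝ ⊓ fixedPoints σ

/-- Multiplication by `i`, as a real-linear endomorphism of `ℂl(V)`. -/
def mulI (Q : QuadraticForm ℝ V) : CCl Q →ₗ[ℝ] CCl Q where
  toFun x := Complex.I • x
  map_add' x y := smul_add _ x y
  map_smul' r x := smul_comm Complex.I r x

/-- The real subspace `V ⊆ V^ℂ ⊆ ℂl(V)`. -/
def Vreal (Q : QuadraticForm ℝ V) : Submodule ℝ (CCl Q) :=
  Submodule.span ℝ (Set.range (ιr Q))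

/-- The canonical real structure `c` (characterized by fixing `V` pointwise). -/
def IsCanonicalC {Q : QuadraticForm ℝ V} (c : RealStructure Q) : Prop :=
  ∀ v : V, c.toFun (ιr Q v) = ιr Q v

/-- `σ` is admissible iff it commutes with the canonical real structure `c`. -/
def Admissible {Q : QuadraticForm ℝ V} (c σ : RealStructure Q) : Prop :=
  ∀ x, σ.toFun (c.toFun x) = c.toFun (σ.toFun x)

/-- Nondegeneracy of a real quadratic form, via its polar form. -/
def QFNondeg (Q : QuadraticForm ℝ V) : Prop :=
  ∀ v : V, (∀ w : V, QuadraticMap.polar Q v w = 0) → v = 0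

/-! ### Auxiliary lemmas -/

section AuxLemmas

variable (Q : QuadraticForm ℝ V)

/-- real part retraction of the complexification -/
def reT : ℂ ⊗[ℝ] V →ₗ[ℝ] V := TensorProduct.lift ((LinearMap.lsmul ℝ V).comp Complex.reLm)

/-- imaginary part retraction of the complexification -/
def imT : ℂ ⊗[ℝ] V →ₗ[ℝ] V := TensorProduct.lift ((LinearMap.lsmul ℝ V).comp Complex.imLm)

@[simp] lemma reT_tmul (z : ℂ) (v : V) : reT (z ⊗ₜ[ℝ] v) = z.re • v := rfl
@[simp] lemma imT_tmul (z : ℂ) (v : V) : imT (z ⊗ₜ[ℝ] v) = z.im • v := rfl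

lemma decompT (t : ℂ ⊗[ℝ] V) : t = 1 ⊗ₜ[ℝ] (reT t) + Complex.I • (1 ⊗ₜ[ℝ] (imT t)) := by
  induction t with
  | zero => simp
  | add x y hx hy =>
      rw [map_add, map_add, tmul_add, tmul_add, smul_add]
      conv_lhs => rw [hx, hy]
      abel
  | tmul z v =>
      simp only [reT_tmul, imT_tmul, tmul_smul, smul_tmul']
      rw [← add_tmul]
      congr 1
      simp [Complex.ext_iff]

lemma ci_inj : Function.Injective (CliffordAlgebra.ι (Q.baseChange ℂ)) := by
  intro x y h
  have h' := congrArg (CliffordAlgebra.equivExterior (Q.baseChange ℂ)) h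
  simp only [CliffordAlgebra.equivExterior, CliffordAlgebra.changeFormEquiv_apply,
    CliffordAlgebra.changeForm_ι] at h'
  exact (ExteriorAlgebra.ι_inj ℂ x y).mp h'

lemma am_inj : Function.Injective (algebraMap ℂ (CCl Q)) := by
  intro x y h
  have h' := congrArg (CliffordAlgebra.equivExterior (Q.baseChange ℂ)) h
  simp only [CliffordAlgebra.equivExterior, CliffordAlgebra.changeFormEquiv_apply,
    CliffordAlgebra.changeForm_algebraMap] at h'
  exact (ExteriorAlgebra.algebraMap_inj (M := ℂ ⊗[ℝ] V) x y).mp h'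

lemma coe_smulC (r : ℝ) (x : CCl Q) : (r : ℂ) • x = r • x := Complex.coe_smul r x

/-- `ιr` as a real-linear map. -/
def ιrL : V →ₗ[ℝ] CCl Q where
  toFun v := ιr Q v
  map_add' a b := by simp [ιr, tmul_add]
  map_smul' r v := by
    simp [ιr, tmul_smul, ← coe_smulC]

@[simp] lemma ιrL_apply (v : V) : ιrL Q v = ιr Q v := rfl

lemma ιr_inj {x y : V} (h : ιr Q x = ιr Q y) : x = y := by
  have h1 : (1 : ℂ) ⊗ₜ[ℝ] x = (1 : ℂ) ⊗ₜ[ℝ] y := ci_inj Q h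
  have := congrArg reT h1
  simpa using this

lemma ιr_mem_VC (v : V) : ιr Q v ∈ VC Q := ⟨_, rfl⟩

lemma I_smul_ιr (y : V) : Complex.I • ιr Q y = CliffordAlgebra.ι (Q.baseChange ℂ) (Complex.I ⊗ₜ[ℝ] y) := by
  rw [ιr, ← map_smul, smul_tmul', smul_eq_mul, mul_one]

lemma mem_Vreal_iff (x : CCl Q) : x ∈ Vreal Q ↔ ∃ v : V, ιr Q v = x := by
  have : Vreal Q = LinearMap.range (ιrL Q) := by
    have hr : Set.range (ιr Q) = Set.range (ιrL Q) := rfl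
    rw [Vreal, hr, ← LinearMap.coe_range, Submodule.span_eq]
  rw [this]
  exact LinearMap.mem_range

lemma ιr_mem_Vreal (v : V) : ιr Q v ∈ Vreal Q := (mem_Vreal_iff Q _).mpr ⟨v, rfl⟩

lemma VC_decomp {w : CCl Q} (hw : w ∈ VC Q) :
    ∃ x y : V, w = ιr Q x + Complex.I • ιr Q y := by
  obtain ⟨t, rfl⟩ := hw
  refine ⟨reT t, imT t, ?_⟩
  rw [I_smul_ιr]
  conv_lhs => rw [decompT t]
  rw [show Complex.I • ((1:ℂ) ⊗ₜ[ℝ] imT t) = Complex.I ⊗ₜ[ℝ] imT t from by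
    rw [smul_tmul', smul_eq_mul, mul_one], map_add]
  rfl

lemma smul_eq_zero_iff' {z : ℂ} (hz : z ≠ 0) {x : CCl Q} (h : z • x = 0) : x = 0 := by
  have h2 : z⁻¹ • z • x = z⁻¹ • (0 : CCl Q) := by rw [h]
  rwa [smul_smul, inv_mul_cancel₀ hz, one_smul, smul_zero] at h2

lemma eq_neg_self_zero {x : CCl Q} (h : x = -x) : x = 0 := by
  have h2 : (2 : ℂ) • x = 0 := by
    rw [two_smul]
    nth_rewrite 1 [h]
    exact neg_add_cancel x
  exact smul_eq_zero_iff' Q two_ne_zero h2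

section RS
variable {Q} (σ : RealStructure Q)

lemma rs_real_smul (r : ℝ) (x : CCl Q) : σ.toFun (r • x) = r • σ.toFun x := by
  rw [← coe_smulC, σ.map_smul', Complex.conj_ofReal, coe_smulC]

lemma rs_neg (x : CCl Q) : σ.toFun (-x) = -σ.toFun x := by
  have := rs_real_smul σ (-1) x
  simpa [← coe_smulC] using this

lemma rs_sub (x y : CCl Q) : σ.toFun (x - y) = σ.toFun x - σ.toFun y := by
  rw [sub_eq_add_neg, σ.map_add', rs_neg, sub_eq_add_neg]

lemma rs_I_smul (x : CCl Q) : σ.toFun (Complex.I • x) = -(Complex.I • σ.toFun x) := by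
  rw [σ.map_smul']
  simp [Complex.conj_I]

lemma rs_algebraMap (z : ℂ) :
    σ.toFun (algebraMap ℂ (CCl Q) z) = algebraMap ℂ (CCl Q) (starRingEnd ℂ z) := by
  rw [Algebra.algebraMap_eq_smul_one, σ.map_smul', σ.map_one',
    Algebra.algebraMap_eq_smul_one]

lemma mem_VFix_iff (x : CCl Q) : x ∈ VFix σ ↔ x ∈ VC Q ∧ σ.toFun x = x := by
  rw [VFix, Submodule.mem_inf, Submodule.restrictScalars_mem]
  rfl

lemma VFix_decomp {w : CCl Q} (hw : w ∈ VC Q) :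
    ∃ a b : CCl Q, a ∈ VFix σ ∧ b ∈ VFix σ ∧ w = a + Complex.I • b := by
  have hσw : σ.toFun w ∈ VC Q := σ.stable w hw
  set d : CCl Q := (2 : ℝ)⁻¹ • (w - σ.toFun w) with hd
  refine ⟨(2 : ℝ)⁻¹ • (w + σ.toFun w), -(Complex.I • d), ?_, ?_, ?_⟩
  · rw [mem_VFix_iff]
    constructor
    · exact Submodule.smul_of_tower_mem _ _ ((VC Q).add_mem hw hσw)
    · rw [rs_real_smul, σ.map_add', σ.invol, add_comm]
  · have hdVC : d ∈ VC Q := Submodule.smul_of_tower_mem _ _ ((VC Q).sub_mem hw hσw)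
    have hσd : σ.toFun d = -d := by
      rw [hd, rs_real_smul, rs_sub, σ.invol, ← coe_smulC, ← coe_smulC, ← smul_neg, neg_sub]
    rw [mem_VFix_iff]
    constructor
    · exact Submodule.neg_mem _ (Submodule.smul_mem _ _ hdVC)
    · rw [rs_neg, rs_I_smul, neg_neg, hσd, smul_neg]
  · have : Complex.I • -(Complex.I • d) = d := by
      rw [smul_neg, smul_smul, Complex.I_mul_I, neg_smul, neg_neg, one_smul]
    rw [this, hd]
    rw [← coe_smulC, ← coe_smulC, ← smul_add]
    have h2 : w + σ.toFun w + (w - σ.toFun w) = (2 : ℝ) • w := by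
      rw [← coe_smulC, Complex.ofReal_ofNat, two_smul]; abel
    rw [h2, ← coe_smulC, smul_smul]
    norm_num

lemma VFix_inter_I {x y : CCl Q} (hx : x ∈ VFix σ) (hy : y ∈ VFix σ)
    (h : x = Complex.I • y) : x = 0 := by
  apply eq_neg_self_zero Q
  conv_lhs => rw [← ((mem_VFix_iff σ x).mp hx).2]
  rw [h, rs_I_smul, ((mem_VFix_iff σ y).mp hy).2]

end RS

section Canon
variable {Q} (c : RealStructure Q) (hc : IsCanonicalC c)

include hc

lemma c_apply (x y : V) :
    c.toFun (ιr Q x + Complex.I • ιr Q y) = ιr Q x - Complex.I • ιr Q y := by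
  rw [c.map_add', hc, rs_I_smul, hc, sub_eq_add_neg]

lemma cfixed_mem_Vreal {w : CCl Q} (hw : w ∈ VC Q) (h : c.toFun w = w) :
    ∃ x : V, w = ιr Q x := by
  obtain ⟨x, y, rfl⟩ := VC_decomp Q hw
  rw [c_apply c hc] at h
  have hy : Complex.I • ιr Q y = 0 := by
    apply eq_neg_self_zero Q
    linear_combination (norm := module) -h
  rw [hy, add_zero]
  exact ⟨x, rfl⟩

end Canon

end AuxLemmas

@[simp] lemma mulI_apply (Q : QuadraticForm ℝ V) (x : CCl Q) : mulI Q x = Complex.I • x := rfl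

/-- For a real structure `σ` on `ℂl(V)`, the following are equivalent:
(1) `σ` is admissible (commutes with `c`); (2) `V_σ` is stable under `c`; (3) `V` is stable
under `σ`; (4) `σ` restricts to a `Q`-orthogonal involutive linear symmetry of `V`;
(5) `V₊ = V ∩ V_σ` and `V₋ = V ∩ iV_σ` form a `Q`-orthogonal direct sum decomposition of `V`. -/
theorem statement1 [FiniteDimensional ℝ V] (Q : QuadraticForm ℝ V)
    (hdim : Even (Module.finrank ℝ V)) (hQ : QFNondeg Q)
    (c : RealStructure Q) (hc : IsCanonicalC c)
    (σ : RealStructure Q) :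
    [ -- (1) σ is admissible
      Admissible c σ,
      -- (2) V_σ is stable by c
      (∀ w ∈ VFix σ, c.toFun w ∈ VFix σ),
      -- (3) V is stable by σ
      (∀ v : V, ∃ v' : V, σ.toFun (ιr Q v) = ιr Q v'),
      -- (4) σ restricts to a Q-orthogonal involutive linear symmetry of V
      (∃ s : V →ₗ[ℝ] V, (∀ v : V, σ.toFun (ιr Q v) = ιr Q (s v))
        ∧ (∀ v : V, s (s v) = v) ∧ (∀ v : V, Q (s v) = Q v)),
      -- (5) V₊ := V ∩ V_σ and V₋ := V ∩ iV_σ give a Q-orthogonal decomposition of V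
      ((Vreal Q ⊓ VFix σ) ⊓ (Vreal Q ⊓ (VFix σ).map (mulI Q)) = ⊥
        ∧ (Vreal Q ⊓ VFix σ) ⊔ (Vreal Q ⊓ (VFix σ).map (mulI Q)) = Vreal Q
        ∧ (∀ x ∈ Vreal Q ⊓ VFix σ, ∀ y ∈ Vreal Q ⊓ (VFix σ).map (mulI Q),
            x * y + y * x = 0)) ].TFAE := by
  tfae_have 1 → 2 := by
    intro h1 w hw
    rw [mem_VFix_iff] at hw ⊢
    exact ⟨c.stable w hw.1, by rw [h1, hw.2]⟩
  tfae_have 2 → 3 := by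
    intro h2 v
    have hwVC : ιr Q v ∈ VC Q := ιr_mem_VC Q v
    obtain ⟨a, b, ha, hb, hdec⟩ := VFix_decomp σ hwVC
    have hca := h2 _ ha
    have hcb := h2 _ hb
    have hcw : c.toFun (ιr Q v) = ιr Q v := hc v
    have heq : a + Complex.I • b = c.toFun a - Complex.I • c.toFun b := by
      have h1 : c.toFun (ιr Q v) = c.toFun a - Complex.I • c.toFun b := by
        rw [hdec, c.map_add', rs_I_smul, sub_eq_add_neg]
      rw [← hdec, ← hcw, h1]
    have hmem1 : a - c.toFun a ∈ VFix σ := Submodule.sub_mem _ ha hca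
    have hmem2 : -(b + c.toFun b) ∈ VFix σ :=
      Submodule.neg_mem _ (Submodule.add_mem _ hb hcb)
    have hkey : a - c.toFun a = Complex.I • (-(b + c.toFun b)) := by
      linear_combination (norm := module) heq
    have h0 : a - c.toFun a = 0 := VFix_inter_I σ hmem1 hmem2 hkey
    have hcaa : c.toFun a = a := by linear_combination (norm := module) -h0
    have hcbb : c.toFun b = -b := by
      have h3 : Complex.I • (b + c.toFun b) = 0 := by
        rw [hcaa] at heq
        linear_combination (norm := module) heq
      have h4 : b + c.toFun b = 0 := smul_eq_zero_iff' Q Complex.I_ne_zero h3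
      linear_combination (norm := module) h4
    have hσw : σ.toFun (ιr Q v) = a - Complex.I • b := by
      rw [hdec, σ.map_add', ((mem_VFix_iff σ a).mp ha).2, rs_I_smul,
        ((mem_VFix_iff σ b).mp hb).2, sub_eq_add_neg]
    have hσVC : σ.toFun (ιr Q v) ∈ VC Q := σ.stable _ hwVC
    have hcσ : c.toFun (σ.toFun (ιr Q v)) = σ.toFun (ιr Q v) := by
      rw [hσw, rs_sub, hcaa, rs_I_smul, hcbb, smul_neg, neg_neg]
    obtain ⟨x, hx⟩ := cfixed_mem_Vreal c hc hσVC hcσ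
    exact ⟨x, hx⟩
  tfae_have 3 → 4 := by
    intro h3
    choose s' hs' using h3
    have hadd : ∀ u v : V, s' (u + v) = s' u + s' v := by
      intro u v
      apply ιr_inj Q
      rw [← hs', show ιr Q (u + v) = ιr Q u + ιr Q v from map_add (ιrL Q) u v,
        σ.map_add', hs', hs']
      exact (map_add (ιrL Q) _ _).symm
    have hsmul : ∀ (r : ℝ) (v : V), s' (r • v) = r • s' v := by
      intro r v
      apply ιr_inj Q
      rw [← hs', show ιr Q (r • v) = r • ιr Q v from map_smul (ιrL Q) r v,
        rs_real_smul, hs']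
      exact (map_smul (ιrL Q) r _).symm
    have hinv : ∀ v : V, s' (s' v) = v := by
      intro v
      apply ιr_inj Q
      rw [← hs', ← hs', σ.invol]
    have hsq : ∀ u : V, ιr Q u * ιr Q u = algebraMap ℂ (CCl Q) ((Q u : ℂ)) := by
      intro u
      rw [ιr, CliffordAlgebra.ι_sq_scalar]
      congr 1
      rw [QuadraticForm.baseChange_tmul]
      simp [Complex.real_smul]
    have horth : ∀ v : V, Q (s' v) = Q v := by
      intro v
      have h1 : algebraMap ℂ (CCl Q) ((Q (s' v) : ℂ)) = algebraMap ℂ (CCl Q) ((Q v : ℂ)) := by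
        rw [← hsq, ← hs', ← σ.map_mul', hsq, rs_algebraMap, Complex.conj_ofReal]
      exact_mod_cast am_inj Q h1
    exact ⟨{ toFun := s', map_add' := hadd, map_smul' := hsmul }, hs', hinv, horth⟩
  tfae_have 4 → 5 := by
    rintro ⟨s, hs, hinv, horth⟩
    have hplus : ∀ x : CCl Q, x ∈ Vreal Q ⊓ VFix σ ↔ ∃ v : V, s v = v ∧ x = ιr Q v := by
      intro x
      rw [Submodule.mem_inf]
      constructor
      · rintro ⟨hx1, hx2⟩
        obtain ⟨v, rfl⟩ := (mem_Vreal_iff Q x).mp hx1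
        refine ⟨v, ?_, rfl⟩
        have h := ((mem_VFix_iff σ _).mp hx2).2
        rw [hs] at h
        exact ιr_inj Q h
      · rintro ⟨v, hv, rfl⟩
        exact ⟨ιr_mem_Vreal Q v,
          (mem_VFix_iff σ _).mpr ⟨ιr_mem_VC Q v, by rw [hs, hv]⟩⟩
    have hminus : ∀ x : CCl Q,
        x ∈ Vreal Q ⊓ (VFix σ).map (mulI Q) ↔ ∃ v : V, s v = -v ∧ x = ιr Q v := by
      intro x
      rw [Submodule.mem_inf, Submodule.mem_map]
      constructor
      · rintro ⟨hx1, w, hw, hmw⟩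
        obtain ⟨v, rfl⟩ := (mem_Vreal_iff Q x).mp hx1
        refine ⟨v, ?_, rfl⟩
        rw [mulI_apply] at hmw
        have hwv : w = -(Complex.I • ιr Q v) := by
          rw [← hmw, smul_smul, Complex.I_mul_I, neg_smul, one_smul, neg_neg]
        have hσw := ((mem_VFix_iff σ w).mp hw).2
        rw [hwv, rs_neg, rs_I_smul, neg_neg, hs] at hσw
        have h6 : ιr Q (s v) = -ιr Q v := by
          have h5 : Complex.I • (ιr Q (s v) + ιr Q v) = 0 := by
            rw [smul_add, hσw]
            exact neg_add_cancel _
          have h7 := smul_eq_zero_iff' Q Complex.I_ne_zero h5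
          linear_combination (norm := module) h7
        rw [show -ιr Q v = ιr Q (-v) from (map_neg (ιrL Q) v).symm] at h6
        exact ιr_inj Q h6
      · rintro ⟨v, hv, rfl⟩
        refine ⟨ιr_mem_Vreal Q v, -(Complex.I • ιr Q v), ?_, ?_⟩
        · rw [mem_VFix_iff]
          refine ⟨Submodule.neg_mem _ (Submodule.smul_mem _ _ (ιr_mem_VC Q v)), ?_⟩
          rw [rs_neg, rs_I_smul, neg_neg, hs, hv,
            show ιr Q (-v) = -ιr Q v from map_neg (ιrL Q) v, smul_neg]
        · rw [mulI_apply, smul_neg, smul_smul, Complex.I_mul_I, neg_smul, one_smul, neg_neg]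
    refine ⟨?_, ?_, ?_⟩
    · rw [eq_bot_iff]
      intro x hx
      rw [Submodule.mem_inf] at hx
      obtain ⟨v, hv, rfl⟩ := (hplus x).mp hx.1
      obtain ⟨v', hv', he⟩ := (hminus _).mp hx.2
      have hvv : v = v' := ιr_inj Q he
      have hvneg : v = -v := by
        nth_rewrite 2 [hvv]
        rw [← hv', ← hvv, hv]
      have hv0 : v = 0 := by
        have h7 : (2 : ℝ) • v = 0 := by
          rw [two_smul]
          nth_rewrite 1 [hvneg]
          exact neg_add_cancel v
        rcases smul_eq_zero.mp h7 with h | h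
        · norm_num at h
        · exact h
      rw [hv0, show ιr Q (0 : V) = 0 from map_zero (ιrL Q)]
      exact Submodule.zero_mem ⊥
    · apply le_antisymm
      · exact sup_le inf_le_left inf_le_left
      · intro x hx
        obtain ⟨v, rfl⟩ := (mem_Vreal_iff Q x).mp hx
        have hvdec : v = (2:ℝ)⁻¹ • (v + s v) + (2:ℝ)⁻¹ • (v - s v) := by
          rw [← smul_add, show v + s v + (v - s v) = (2:ℝ) • v from by rw [two_smul]; abel,
            smul_smul]
          norm_num
        have h1 : ιr Q ((2:ℝ)⁻¹ • (v + s v)) ∈ Vreal Q ⊓ VFix σ :=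
          (hplus _).mpr ⟨_, by rw [map_smul, map_add, hinv, add_comm], rfl⟩
        have h2 : ιr Q ((2:ℝ)⁻¹ • (v - s v)) ∈ Vreal Q ⊓ (VFix σ).map (mulI Q) :=
          (hminus _).mpr ⟨_, by rw [map_smul, map_sub, hinv, ← smul_neg, neg_sub], rfl⟩
        have h3 := Submodule.add_mem_sup h1 h2
        rwa [show ιr Q ((2:ℝ)⁻¹ • (v + s v)) + ιr Q ((2:ℝ)⁻¹ • (v - s v)) = ιr Q v from
          (map_add (ιrL Q) _ _).symm.trans (congrArg (ιr Q) hvdec.symm)] at h3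
    · intro x hx y hy
      obtain ⟨u, hu, rfl⟩ := (hplus x).mp hx
      obtain ⟨w, hw, rfl⟩ := (hminus y).mp hy
      have hpol : QuadraticMap.polar Q u w = 0 := by
        have h1 : QuadraticMap.polar Q (s u) (s w) = QuadraticMap.polar Q u w := by
          simp only [QuadraticMap.polar, ← map_add, horth]
        rw [hu, hw, QuadraticMap.polar_neg_right] at h1
        linarith
      show ιr Q u * ιr Q w + ιr Q w * ιr Q u = 0
      rw [ιr, ιr, CliffordAlgebra.ι_mul_ι_add_swap]
      have hz : QuadraticMap.polar (Q.baseChange ℂ) ((1:ℂ) ⊗ₜ[ℝ] u) ((1:ℂ) ⊗ₜ[ℝ] w) = 0 := by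
        simp only [QuadraticMap.polar, ← tmul_add, QuadraticForm.baseChange_tmul, mul_one,
          Complex.real_smul]
        simp only [QuadraticMap.polar] at hpol
        exact_mod_cast hpol
      rw [hz, map_zero]
  tfae_have 5 → 3 := by
    rintro ⟨-, hsup, -⟩ v
    have hv : ιr Q v ∈ Vreal Q := ιr_mem_Vreal Q v
    rw [← hsup] at hv
    obtain ⟨x, hx, y, hy, hxy⟩ := Submodule.mem_sup.mp hv
    rw [Submodule.mem_inf] at hx hy
    obtain ⟨a, ha⟩ := (mem_Vreal_iff Q x).mp hx.1
    obtain ⟨b, hb⟩ := (mem_Vreal_iff Q y).mp hy.1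
    have hσx : σ.toFun x = x := ((mem_VFix_iff σ x).mp hx.2).2
    have hσy : σ.toFun y = -y := by
      obtain ⟨w, hw, hmw⟩ := Submodule.mem_map.mp hy.2
      rw [mulI_apply] at hmw
      rw [← hmw, rs_I_smul, ((mem_VFix_iff σ w).mp hw).2]
    refine ⟨a - b, ?_⟩
    rw [← hxy, σ.map_add', hσx, hσy, show ιr Q (a - b) = ιr Q a - ιr Q b from
      map_sub (ιrL Q) a b, ha, hb, sub_eq_add_neg]
  tfae_have 3 → 1 := by
    intro h3 x
    induction x using CliffordAlgebra.induction with
    | algebraMap r => rw [rs_algebraMap, rs_algebraMap, rs_algebraMap, rs_algebraMap]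
    | ι m =>
        have hm : CliffordAlgebra.ι (Q.baseChange ℂ) m ∈ VC Q := ⟨m, rfl⟩
        obtain ⟨x, y, hdec⟩ := VC_decomp Q hm
        obtain ⟨x', hx'⟩ := h3 x
        obtain ⟨y', hy'⟩ := h3 y
        have e1 : σ.toFun (c.toFun (CliffordAlgebra.ι (Q.baseChange ℂ) m))
            = ιr Q x' + Complex.I • ιr Q y' := by
          rw [hdec, c_apply c hc, rs_sub, hx', rs_I_smul, hy', sub_neg_eq_add]
        have e2 : c.toFun (σ.toFun (CliffordAlgebra.ι (Q.baseChange ℂ) m))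
            = ιr Q x' + Complex.I • ιr Q y' := by
          rw [hdec, σ.map_add', hx', rs_I_smul, hy',
            show -(Complex.I • ιr Q y') = Complex.I • ιr Q (-y') from by
              rw [show ιr Q (-y') = -ιr Q y' from map_neg (ιrL Q) y', smul_neg],
            c_apply c hc,
            show ιr Q (-y') = -ιr Q y' from map_neg (ιrL Q) y', smul_neg, sub_neg_eq_add]
        rw [e1, e2]
    | mul a b ha hb => rw [c.map_mul', σ.map_mul', ha, hb, ← c.map_mul', ← σ.map_mul']
    | add a b ha hb => rw [c.map_add', σ.map_add', ha, hb, ← c.map_add', ← σ.map_add']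
  tfae_finish
end
end

section
/- Let b ∈ Γ_ℂ with b·c(b) a nonzero real number, so that σ := Ad_b ∘ c is a real structure on ℂl(V). Then σ is admissible (commutes with c) if and only if c(b) = e^{iθ} b for some θ ∈ ℝ. In that case b can be rescaled by a nonzero complex number so that c(b) = b and b² = ±1 (b is then called real and normalized); a real normalized b inducing σ satisfies b^× = ±b, belongs to the Pin group Pin(Q), and is unique up to sign. -/
noncomputable section

open TensorProduct

variable {V : Type*} [AddCommGroup V] [Module ℝ V]

/-- Membership in the complex Clifford group `Γ_ℂ`. -/
def InCliffordGroup {Q : QuadraticForm ℝ V} (g : (CCl Q)ˣ) : Prop :=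
  ∀ x ∈ VC Q, (g : CCl Q) * x * ((g⁻¹ : (CCl Q)ˣ) : CCl Q) ∈ VC Q


section Aux


section Words
variable {Q : QuadraticForm ℝ V} {n : ℕ} (β : Fin n → CCl Q)

/-- Word in the generators. -/
def Wd (L : List (Fin n)) : CCl Q := (L.map β).prod

@[simp] lemma Wd_nil : Wd β [] = 1 := rfl
@[simp] lemma Wd_cons (i : Fin n) (L : List (Fin n)) : Wd β (i :: L) = β i * Wd β L := by
  simp [Wd]
lemma Wd_append (L L' : List (Fin n)) : Wd β (L ++ L') = Wd β L * Wd β L' := by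
  simp [Wd]

variable {β}
variable {d : Fin n → ℂ}

section swap
variable (hsq : ∀ i, β i * β i = algebraMap ℂ (CCl Q) (d i))
  (hsw : ∀ i j, i ≠ j → β i * β j = -(β j * β i))
include hsq hsw

lemma Wd_swap (i : Fin n) (L : List (Fin n)) :
    β i * Wd β L = ((-1 : ℂ)) ^ (L.length + L.count i) • (Wd β L * β i) := by
  induction L with
  | nil => simp
  | cons j L ih =>
    rcases eq_or_ne i j with rfl | hij
    · rw [Wd_cons, ← mul_assoc, hsq i, ih, smul_mul_assoc, smul_smul, mul_assoc, hsq i]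
      have hs : ((-1:ℂ)) ^ ((i::L).length + (i::L).count i) * (-1) ^ (L.length + L.count i)
          = 1 := by
        simp only [List.length_cons, List.count_cons_self, ← pow_add]
        have : L.length + 1 + (L.count i + 1) + (L.length + L.count i)
            = 2 * (L.length + L.count i + 1) := by ring
        rw [this, pow_mul]
        norm_num
      rw [hs, one_smul, Algebra.commutes]
    · rw [Wd_cons, ← mul_assoc, hsw i j hij, neg_mul, mul_assoc, ih, mul_smul_comm]
      have hs : ((-1:ℂ)) ^ ((j::L).length + (j::L).count i)
          = -((-1:ℂ)) ^ (L.length + L.count i) := by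
        rw [List.count_cons_of_ne hij.symm]
        simp [pow_add, pow_succ]
      rw [hs, neg_smul, neg_inj, ← mul_assoc]

lemma Wd_conj (i : Fin n) (L : List (Fin n)) :
    β i * Wd β L * β i = (((-1 : ℂ)) ^ (L.length + L.count i) * d i) • Wd β L := by
  rw [Wd_swap hsq hsw, smul_mul_assoc, mul_assoc, hsq i, ← Algebra.commutes (d i),
    ← Algebra.smul_def, smul_smul]
end swap

/-- Twisted conjugation operator. -/
def Tc (β : Fin n → CCl Q) (d : Fin n → ℂ) (i : Fin n) : Module.End ℂ (CCl Q) where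
  toFun x := (d i)⁻¹ • (β i * x * β i)
  map_add' x y := by simp only [mul_add, add_mul, smul_add]
  map_smul' z x := by
    simp only [RingHom.id_apply, mul_smul_comm, smul_mul_assoc, smul_smul]
    rw [mul_comm]

/-- Averaging projection. -/
def Pc (β : Fin n → CCl Q) (d : Fin n → ℂ) (i : Fin n) : Module.End ℂ (CCl Q) :=
  (2:ℂ)⁻¹ • (1 + Tc β d i)

section ops
variable (hd : ∀ i, d i ≠ 0)
  (hsq : ∀ i, β i * β i = algebraMap ℂ (CCl Q) (d i))
  (hsw : ∀ i j, i ≠ j → β i * β j = -(β j * β i))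
include hd hsq hsw

lemma Tc_word (i : Fin n) (L : List (Fin n)) :
    Tc β d i (Wd β L) = ((-1 : ℂ)) ^ (L.length + L.count i) • Wd β L := by
  show (d i)⁻¹ • (β i * Wd β L * β i) = _
  rw [Wd_conj hsq hsw, smul_smul]
  congr 1
  rw [mul_comm, pow_add, mul_assoc, mul_assoc, mul_inv_cancel₀ (hd i), mul_one, ← pow_add]

lemma Pc_word (i : Fin n) (L : List (Fin n)) :
    Pc β d i (Wd β L)
      = if Even (L.length + L.count i) then Wd β L else 0 := by
  have h : Pc β d i (Wd β L) = (2:ℂ)⁻¹ • (Wd β L + Tc β d i (Wd β L)) := rfl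
  rw [h, Tc_word hd hsq hsw]
  by_cases he : Even (L.length + L.count i)
  · rw [he.neg_one_pow, if_pos he, one_smul, ← two_smul ℂ, smul_smul]
    norm_num
  · rw [(Nat.not_even_iff_odd.mp he).neg_one_pow, if_neg he, neg_one_smul,
      add_neg_cancel, smul_zero]

lemma Tc_central (x : CCl Q) (hx : ∀ i, β i * x = x * β i) (i : Fin n) :
    Tc β d i x = x := by
  show (d i)⁻¹ • (β i * x * β i) = x
  rw [hx i, mul_assoc, hsq i, ← Algebra.commutes (d i), ← Algebra.smul_def, smul_smul,
    inv_mul_cancel₀ (hd i), one_smul]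

lemma Pc_central (x : CCl Q) (hx : ∀ i, β i * x = x * β i) (i : Fin n) :
    Pc β d i x = x := by
  have h : Pc β d i x = (2:ℂ)⁻¹ • (x + Tc β d i x) := rfl
  rw [h, Tc_central hd hsq hsw x hx, ← two_smul ℂ, smul_smul]
  norm_num

lemma prodPc_word (l : List (Fin n)) (L : List (Fin n)) :
    ((l.map (Pc β d)).prod) (Wd β L)
      = if (∀ i ∈ l, Even (L.length + L.count i)) then Wd β L else 0 := by
  induction l with
  | nil => simp [Module.End.one_apply]
  | cons i l ih =>
    rw [List.map_cons, List.prod_cons, Module.End.mul_apply, ih]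
    by_cases hc : ∀ j ∈ l, Even (L.length + L.count j)
    · rw [if_pos hc, Pc_word hd hsq hsw]
      by_cases hi : Even (L.length + L.count i)
      · rw [if_pos hi, if_pos]
        intro j hj
        rcases List.mem_cons.mp hj with rfl | hj
        · exact hi
        · exact hc j hj
      · rw [if_neg hi, if_neg]
        intro hall
        exact hi (hall i List.mem_cons_self)
    · rw [if_neg hc, map_zero, if_neg]
      intro hall
      exact hc fun j hj => hall j (List.mem_cons_of_mem i hj)

lemma prodPc_central (l : List (Fin n)) (x : CCl Q) (hx : ∀ i, β i * x = x * β i) :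
    ((l.map (Pc β d)).prod) x = x := by
  induction l with
  | nil => simp [Module.End.one_apply]
  | cons i l ih =>
    rw [List.map_cons, List.prod_cons, Module.End.mul_apply, ih,
      Pc_central hd hsq hsw x hx]
end ops

lemma mem_split_first {α : Type*} (i : α) :
    ∀ L : List α, i ∈ L → ∃ A B, L = A ++ i :: B ∧ i ∉ A := by
  intro L
  induction L with
  | nil => intro h; simp at h
  | cons a L ih =>
    intro h
    by_cases hai : a = i
    · exact ⟨[], L, by rw [hai]; rfl, List.not_mem_nil⟩
    · have hi : i ∈ L := by
        rcases List.mem_cons.mp h with h1 | h1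
        · exact absurd h1.symm hai
        · exact h1
      obtain ⟨A, B, rfl, hA⟩ := ih hi
      exact ⟨a :: A, B, rfl, by
        intro hmem
        rcases List.mem_cons.mp hmem with h1 | h1
        · exact hai h1.symm
        · exact hA h1⟩

section scalarWords
variable (hd : ∀ i, d i ≠ 0)
  (hsq : ∀ i, β i * β i = algebraMap ℂ (CCl Q) (d i))
  (hsw : ∀ i j, i ≠ j → β i * β j = -(β j * β i))
include hd hsq hsw

lemma Wd_all_even_scalar :
    ∀ (k : ℕ) (L : List (Fin n)), L.length ≤ k → (∀ i, Even (L.count i)) →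
      ∃ w : ℂ, Wd β L = algebraMap ℂ (CCl Q) w := by
  intro k
  induction k with
  | zero =>
    intro L hlen _
    have : L = [] := List.eq_nil_of_length_eq_zero (Nat.le_zero.mp hlen)
    exact ⟨1, by simp [this]⟩
  | succ k ih =>
    intro L hlen hcount
    match L with
    | [] => exact ⟨1, by simp⟩
    | i :: L' =>
      have hi : i ∈ L' := by
        have h := hcount i
        rw [List.count_cons_self] at h
        rcases h with ⟨m, hm⟩
        exact List.count_pos_iff.mp (by omega)
      obtain ⟨A, B, rfl, hA⟩ := mem_split_first i L' hi
      have hW : Wd β (i :: (A ++ i :: B))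
          = (((-1:ℂ)) ^ (A.length + A.count i) * d i) • Wd β (A ++ B) := by
        rw [Wd_cons, Wd_append, Wd_cons, ← mul_assoc, ← mul_assoc,
          Wd_conj hsq hsw i A, smul_mul_assoc, ← Wd_append]
      have hcount' : ∀ j, Even ((A ++ B).count j) := by
        intro j
        have h := hcount j
        by_cases hji : i = j
        · subst hji
          simp only [List.count_cons, List.count_append, if_pos rfl] at h ⊢
          rw [Nat.even_iff] at h ⊢
          omega
        · simp only [List.count_cons, List.count_append, if_neg hji] at h ⊢
          rw [Nat.even_iff] at h ⊢
          omega
      have hlen' : (A ++ B).length ≤ k := by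
        simp only [List.length_cons, List.length_append] at hlen ⊢
        omega
      obtain ⟨w, hw⟩ := ih (A ++ B) hlen' hcount'
      refine ⟨((-1:ℂ)) ^ (A.length + A.count i) * d i * w, ?_⟩
      rw [hW, hw, Algebra.smul_def, ← map_mul]
end scalarWords

lemma length_eq_sum_count (L : List (Fin n)) : L.length = ∑ i : Fin n, L.count i := by
  induction L with
  | nil => simp
  | cons a L ih =>
    simp only [List.length_cons, List.count_cons, ih, Finset.sum_add_distrib, beq_iff_eq]
    rw [Finset.sum_ite_eq Finset.univ a (fun _ => 1)]
    simp

lemma even_of_all_even (hn : Even n) (L : List (Fin n))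
    (h : ∀ i, Even (L.length + L.count i)) : ∀ i, Even (L.count i) := by
  have hsum : Even (∑ i : Fin n, (L.length + L.count i)) := by
    rw [even_iff_two_dvd]
    exact Finset.dvd_sum fun i _ => (h i).two_dvd
  rw [Finset.sum_add_distrib, Finset.sum_const, Finset.card_univ, Fintype.card_fin,
    ← length_eq_sum_count] at hsum
  have hlen : Even L.length := by
    simp only [smul_eq_mul] at hsum
    rcases hn with ⟨m, hm⟩
    rcases hsum with ⟨p, hp⟩
    have h2 : n * L.length = 2 * (m * L.length) :=
      (congrArg (· * L.length) hm).trans (by ring)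
    rw [h2] at hp
    rw [Nat.even_iff]
    omega
  intro i
  have := h i
  rw [Nat.even_iff] at *
  rcases hlen with h1
  omega
end Words


lemma ccl_algebraMap_injective (Q : QuadraticForm ℝ V) :
    Function.Injective (algebraMap ℂ (CCl Q)) := by
  have h2 : Invertible (2:ℂ) := invertibleOfNonzero two_ne_zero
  intro x y h
  have := congrArg (CliffordAlgebra.equivExterior (Q.baseChange ℂ)) h
  simp only [CliffordAlgebra.equivExterior, CliffordAlgebra.changeFormEquiv_apply,
    CliffordAlgebra.changeForm_algebraMap] at this
  exact (ExteriorAlgebra.algebraMap_leftInverse _).injective this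

lemma ccl_nontrivial (Q : QuadraticForm ℝ V) : Nontrivial (CCl Q) := by
  have h2 : Invertible (2:ℂ) := invertibleOfNonzero two_ne_zero
  infer_instance

lemma polar_baseChange_tmul (Q : QuadraticForm ℝ V) (v w : V) :
    QuadraticMap.polar (Q.baseChange ℂ) ((1:ℂ) ⊗ₜ[ℝ] v) ((1:ℂ) ⊗ₜ[ℝ] w)
      = ((QuadraticMap.polar Q v w : ℝ) : ℂ) := by
  simp [QuadraticMap.polar, ← TensorProduct.tmul_add, QuadraticForm.baseChange_tmul,
    Complex.real_smul]

section Center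
variable (Q : QuadraticForm ℝ V)

lemma ccl_mem_span_words {n : ℕ} (e : Module.Basis (Fin n) ℝ V) (x : CCl Q) :
    x ∈ Submodule.span ℂ (Set.range
      (Wd (fun i => CliffordAlgebra.ι (Q.baseChange ℂ) ((1:ℂ) ⊗ₜ[ℝ] e i)))) := by
  set β : Fin n → CCl Q :=
    fun i => CliffordAlgebra.ι (Q.baseChange ℂ) ((1:ℂ) ⊗ₜ[ℝ] e i) with hβ
  set M := Submodule.span ℂ (Set.range (Wd β)) with hM
  have hβM : ∀ i, β i ∈ M := by
    intro i
    refine Submodule.subset_span ⟨[i], ?_⟩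
    simp
  have hmul : ∀ a ∈ M, ∀ b ∈ M, a * b ∈ M := by
    intro a ha
    induction ha using Submodule.span_induction with
    | mem x hx =>
      obtain ⟨L, rfl⟩ := hx
      intro b hb
      induction hb using Submodule.span_induction with
      | mem y hy =>
        obtain ⟨L', rfl⟩ := hy
        exact Submodule.subset_span ⟨L ++ L', Wd_append β L L'⟩
      | zero => rw [mul_zero]; exact M.zero_mem
      | add y z _ _ hy hz => rw [mul_add]; exact M.add_mem hy hz
      | smul c y _ hy => rw [mul_smul_comm]; exact M.smul_mem c hy
    | zero => intro b hb; rw [zero_mul]; exact M.zero_mem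
    | add x y _ _ hx hy => intro b hb; rw [add_mul]; exact M.add_mem (hx b hb) (hy b hb)
    | smul c x _ hx => intro b hb; rw [smul_mul_assoc]; exact M.smul_mem c (hx b hb)
  induction x using CliffordAlgebra.induction with
  | algebraMap r =>
    rw [Algebra.algebraMap_eq_smul_one]
    exact M.smul_mem r (Submodule.subset_span ⟨[], rfl⟩)
  | ι m =>
    have hv : ∀ v : V, CliffordAlgebra.ι (Q.baseChange ℂ) ((1:ℂ) ⊗ₜ[ℝ] v) ∈ M := by
      intro v
      have hrepr := e.sum_repr v
      have : CliffordAlgebra.ι (Q.baseChange ℂ) ((1:ℂ) ⊗ₜ[ℝ] v)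
          = ∑ i : Fin n, ((e.repr v i : ℝ) : ℂ) • β i := by
        rw [← hrepr]
        rw [TensorProduct.tmul_sum]
        rw [map_sum]
        congr 1
        ext i
        rw [TensorProduct.tmul_smul, ← algebraMap_smul ℂ (e.repr v i), map_smul]
        norm_num
        rfl
      rw [this]
      exact Submodule.sum_mem M fun i _ => M.smul_mem _ (hβM i)
    induction m using TensorProduct.induction_on with
    | zero => rw [map_zero]; exact M.zero_mem
    | tmul z v =>
      have hzv : (z ⊗ₜ[ℝ] v : ℂ ⊗[ℝ] V) = z • ((1:ℂ) ⊗ₜ[ℝ] v) := by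
        rw [TensorProduct.smul_tmul', smul_eq_mul, mul_one]
      rw [hzv, map_smul]
      exact M.smul_mem z (hv v)
    | add a b ha hb => rw [map_add]; exact M.add_mem ha hb
  | mul a b ha hb => exact hmul a ha b hb
  | add a b ha hb => exact M.add_mem ha hb


lemma exists_scalar_of_central [FiniteDimensional ℝ V]
    (hdim : Even (Module.finrank ℝ V)) (hQ : QFNondeg Q) (z : CCl Q)
    (hz : ∀ m : ℂ ⊗[ℝ] V, CliffordAlgebra.ι (Q.baseChange ℂ) m * z
        = z * CliffordAlgebra.ι (Q.baseChange ℂ) m) :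
    ∃ w : ℂ, z = algebraMap ℂ (CCl Q) w := by
  obtain ⟨e, he⟩ := LinearMap.BilinForm.exists_orthogonal_basis
    (QuadraticForm.associated_isSymm ℝ Q)
  set β : Fin (Module.finrank ℝ V) → CCl Q :=
    fun i => CliffordAlgebra.ι (Q.baseChange ℂ) ((1:ℂ) ⊗ₜ[ℝ] e i) with hβ
  set d : Fin (Module.finrank ℝ V) → ℂ := fun i => ((Q (e i) : ℝ) : ℂ) with hdd
  -- polar values
  have hpolar : ∀ i j, i ≠ j → QuadraticMap.polar Q (e i) (e j) = 0 := by
    intro i j hij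
    have h3 := QuadraticMap.two_nsmul_associated ℝ Q
    have h4 := congrFun (congrArg DFunLike.coe
      (congrFun (congrArg DFunLike.coe h3) (e i))) (e j)
    simp only [LinearMap.smul_apply, QuadraticMap.polarBilin_apply_apply] at h4
    rw [← h4, he hij, smul_zero]
  have hQei : ∀ i, Q (e i) ≠ 0 := by
    intro i h0
    have hzz : ∀ w, QuadraticMap.polar Q (e i) w = 0 := by
      intro w
      have hrepr := e.sum_repr w
      rw [← hrepr, ← QuadraticMap.polarBilin_apply_apply, map_sum]
      refine Finset.sum_eq_zero fun j _ => ?_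
      rw [map_smul]
      rcases eq_or_ne i j with rfl | hij
      · rw [QuadraticMap.polarBilin_apply_apply, QuadraticMap.polar_self, h0]
        simp
      · rw [QuadraticMap.polarBilin_apply_apply, hpolar i j hij]
        simp
    exact e.ne_zero i (hQ (e i) hzz)
  have hd : ∀ i, d i ≠ 0 := fun i => by
    simp only [hdd, ne_eq, Complex.ofReal_eq_zero]
    exact hQei i
  have hQ1 : ∀ v : V, (Q.baseChange ℂ) ((1:ℂ) ⊗ₜ[ℝ] v) = ((Q v : ℝ) : ℂ) := by
    intro v
    rw [QuadraticForm.baseChange_tmul]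
    rw [mul_one, Complex.real_smul, mul_one]
  have hsq : ∀ i, β i * β i = algebraMap ℂ (CCl Q) (d i) := by
    intro i
    rw [hβ, hdd]
    rw [CliffordAlgebra.ι_sq_scalar, hQ1]
  have hsw : ∀ i j, i ≠ j → β i * β j = -(β j * β i) := by
    intro i j hij
    have h := CliffordAlgebra.ι_mul_ι_add_swap (Q := Q.baseChange ℂ)
      ((1:ℂ) ⊗ₜ[ℝ] e i) ((1:ℂ) ⊗ₜ[ℝ] e j)
    rw [polar_baseChange_tmul, hpolar i j hij] at h
    simp only [Complex.ofReal_zero, map_zero] at h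
    exact eq_neg_of_add_eq_zero_left h
  have hz' : ∀ i, β i * z = z * β i := fun i => hz _
  set Ptot : Module.End ℂ (CCl Q) :=
    ((List.finRange (Module.finrank ℝ V)).map (Pc β d)).prod with hP
  have h1 : Ptot z = z := prodPc_central hd hsq hsw _ z hz'
  have h2 : ∀ x ∈ Submodule.span ℂ (Set.range (Wd β)),
      ∃ w, Ptot x = algebraMap ℂ (CCl Q) w := by
    intro x hx
    induction hx using Submodule.span_induction with
    | mem x hxx =>
      obtain ⟨L, rfl⟩ := hxx
      rw [hP, prodPc_word hd hsq hsw]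
      by_cases hc : ∀ i ∈ List.finRange (Module.finrank ℝ V),
          Even (L.length + L.count i)
      · rw [if_pos hc]
        exact Wd_all_even_scalar hd hsq hsw L.length L le_rfl
          (even_of_all_even hdim L fun i => hc i (List.mem_finRange i))
      · rw [if_neg hc]
        exact ⟨0, (map_zero _).symm⟩
    | zero => exact ⟨0, by rw [map_zero, map_zero]⟩
    | add x y _ _ hx hy =>
      obtain ⟨w1, hw1⟩ := hx
      obtain ⟨w2, hw2⟩ := hy
      exact ⟨w1 + w2, by rw [map_add, hw1, hw2, map_add]⟩
    | smul c x _ hx =>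
      obtain ⟨w, hw⟩ := hx
      exact ⟨c * w, by rw [map_smul, hw, map_mul, ← Algebra.smul_def]⟩
  obtain ⟨w, hw⟩ := h2 z (ccl_mem_span_words Q e z)
  exact ⟨w, by rw [← h1, hw]⟩
end Center

end Aux

lemma central_of_conj_eq {A : Type*} [Monoid A] {g gi h hi : A}
    (hgig : gi * g = 1) (hhih : hi * h = 1) (x : A)
    (heq : g * x * gi = h * x * hi) : (hi * g) * x = x * (hi * g) := by
  have h2 := congrArg (fun y => hi * (y * g)) heq
  simp only [mul_assoc, hgig, mul_one] at h2
  rw [← mul_assoc hi h, hhih, one_mul] at h2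
  simp only [mul_assoc]
  exact h2

section Helpers
variable {Q : QuadraticForm ℝ V}

lemma mul_algebraMap_eq_smul (x : CCl Q) (z : ℂ) :
    x * algebraMap ℂ (CCl Q) z = z • x := by
  rw [← Algebra.commutes, ← Algebra.smul_def]

lemma smul_one_eq_algebraMap (z : ℂ) :
    z • (1 : CCl Q) = algebraMap ℂ (CCl Q) z :=
  (Algebra.algebraMap_eq_smul_one z).symm

lemma rs_invol_bijOn (c : RealStructure Q) : Function.Bijective c.toFun :=
  Function.Involutive.bijective c.invol
end Helpers

/-- Let `b ∈ Γ_ℂ` with `b·c(b)` a nonzero real, and `σ = Ad_b ∘ c`.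
Then `σ` is admissible iff `c(b) = e^{iθ}b` for some real `θ`; in that case `b` can be
rescaled to a real normalized element (`c(b') = b'`, `b'² = ±1`), and any real normalized
`b'` inducing `σ` satisfies `b'^× = ±b'`, lies in `Pin(Q)`, and is unique up to sign. -/
theorem statement3 [FiniteDimensional ℝ V] (Q : QuadraticForm ℝ V)
    (hdim : Even (Module.finrank ℝ V)) (hQ : QFNondeg Q)
    (c : RealStructure Q) (hc : IsCanonicalC c)
    (b : (CCl Q)ˣ) (hb : InCliffordGroup b) (l : ℝ) (hl : l ≠ 0)
    (hbc : (b : CCl Q) * c.toFun (b : CCl Q) = algebraMap ℂ (CCl Q) (l : ℂ))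
    (σ : RealStructure Q)
    (hσ : ∀ x, σ.toFun x = (b : CCl Q) * c.toFun x * ((b⁻¹ : (CCl Q)ˣ) : CCl Q)) :
    -- σ admissible iff c(b) = e^{iθ} b
    (Admissible c σ ↔ ∃ θ : ℝ, c.toFun (b : CCl Q)
        = Complex.exp ((θ : ℂ) * Complex.I) • (b : CCl Q))
    -- in that case b can be rescaled to a real normalized element inducing σ
    ∧ (Admissible c σ → ∃ μ : ℂ, μ ≠ 0
        ∧ c.toFun (μ • (b : CCl Q)) = μ • (b : CCl Q)
        ∧ ((μ • (b : CCl Q)) * (μ • (b : CCl Q)) = 1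
            ∨ (μ • (b : CCl Q)) * (μ • (b : CCl Q)) = -1)
        ∧ (∀ x, (μ • (b : CCl Q)) * c.toFun x = σ.toFun x * (μ • (b : CCl Q))))
    -- any real normalized b' inducing σ: b'^× = ±b', b' ∈ Pin(Q), uniqueness up to sign
    ∧ (∀ b' : CCl Q, c.toFun b' = b' → (b' * b' = 1 ∨ b' * b' = -1) →
        (∀ x, b' * c.toFun x = σ.toFun x * b') →
        (c.toFun (CliffordAlgebra.reverse b') = b'
            ∨ c.toFun (CliffordAlgebra.reverse b') = -b')
        ∧ (b' * CliffordAlgebra.reverse b' = 1 ∨ b' * CliffordAlgebra.reverse b' = -1)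
        ∧ (∃ u : (CCl Q)ˣ, (u : CCl Q) = b' ∧ InCliffordGroup u)
        ∧ (∀ b'' : CCl Q, c.toFun b'' = b'' → (b'' * b'' = 1 ∨ b'' * b'' = -1) →
            (∀ x, b'' * c.toFun x = σ.toFun x * b'') → (b'' = b' ∨ b'' = -b'))) := by
  classical
  have hinj : Function.Injective (algebraMap ℂ (CCl Q)) := ccl_algebraMap_injective Q
  haveI : Nontrivial (CCl Q) := ccl_nontrivial Q
  set B : CCl Q := (b : CCl Q) with hBdef
  set Bi : CCl Q := ((b⁻¹ : (CCl Q)ˣ) : CCl Q) with hBidef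
  have hBBi : B * Bi = 1 := b.mul_inv
  have hBiB : Bi * B = 1 := b.inv_mul
  have hl0 : ((l:ℝ):ℂ) ≠ 0 := Complex.ofReal_ne_zero.mpr hl
  have hcB : c.toFun B = ((l:ℝ):ℂ) • Bi := by
    have h := congrArg (fun y => Bi * y) hbc
    simp only [← mul_assoc, hBiB, one_mul] at h
    rw [h, mul_algebraMap_eq_smul]
  have hcBi_l : c.toFun Bi * c.toFun B = 1 := by
    rw [← c.map_mul', hBiB, c.map_one']
  have hcBi : c.toFun Bi = ((l:ℝ):ℂ)⁻¹ • B := by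
    refine left_inv_eq_right_inv hcBi_l ?_
    rw [hcB, smul_mul_assoc, mul_smul_comm, smul_smul, hBiB,
      mul_inv_cancel₀ hl0, one_smul]
  have hcent : ∀ z : CCl Q, (∀ m : ℂ ⊗[ℝ] V,
        CliffordAlgebra.ι (Q.baseChange ℂ) m * z
          = z * CliffordAlgebra.ι (Q.baseChange ℂ) m) →
      ∃ w : ℂ, z = algebraMap ℂ (CCl Q) w :=
    fun z hz => exists_scalar_of_central Q hdim hQ z hz
  -- Part 1, forward direction
  have hforward : Admissible c σ →
      ∃ θ : ℝ, c.toFun B = Complex.exp ((θ:ℂ) * Complex.I) • B := by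
    intro hadm
    have hkey : ∀ x : CCl Q, B * x * Bi = Bi * x * B := by
      intro x
      have h := hadm x
      rw [hσ, hσ, c.invol, c.map_mul', c.map_mul', c.invol, hcB, hcBi] at h
      rw [smul_mul_assoc, smul_mul_assoc, mul_smul_comm, smul_smul,
        mul_inv_cancel₀ hl0, one_smul] at h
      exact h
    obtain ⟨w, hw⟩ := hcent (B * B)
      (fun m => (central_of_conj_eq hBiB hBBi _ (hkey _)).symm)
    have hw0 : w ≠ 0 := by
      intro h0
      rw [h0, map_zero] at hw
      have h1 : Bi * (B * B) * Bi = 1 := by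
        rw [← mul_assoc Bi B B, hBiB, one_mul, hBBi]
      rw [hw, mul_zero, zero_mul] at h1
      exact zero_ne_one h1
    have hBr : B * (w⁻¹ • B) = 1 := by
      rw [mul_smul_comm, hw, Algebra.smul_def, ← map_mul, inv_mul_cancel₀ hw0, map_one]
    have hBi_eq : Bi = w⁻¹ • B := left_inv_eq_right_inv hBiB hBr
    set z0 : ℂ := ((l:ℝ):ℂ) * w⁻¹ with hz0def
    have hcBz : c.toFun B = z0 • B := by rw [hcB, hBi_eq, smul_smul]
    have hz1 : (starRingEnd ℂ) z0 * z0 = 1 := by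
      have h := c.invol B
      rw [hcBz, c.map_smul', hcBz, smul_smul] at h
      have h2 := congrArg (fun y => y * Bi) h
      simp only [smul_mul_assoc, hBBi] at h2
      apply hinj
      rw [← smul_one_eq_algebraMap, h2, map_one]
    have habs : ‖z0‖ = 1 := by
      have hn : Complex.normSq z0 = 1 := by
        have h := hz1
        rw [← Complex.normSq_eq_conj_mul_self] at h
        exact_mod_cast h
      rw [Complex.norm_def, hn, Real.sqrt_one]
    refine ⟨z0.arg, ?_⟩
    have hexp : Complex.exp ((z0.arg:ℂ) * Complex.I) = z0 := by
      conv_rhs => rw [← Complex.norm_mul_exp_arg_mul_I z0]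
      rw [habs, Complex.ofReal_one, one_mul]
    rw [hcBz, hexp]
  -- Part 1, backward direction
  have hbackward : (∃ θ : ℝ, c.toFun B = Complex.exp ((θ:ℂ) * Complex.I) • B) →
      Admissible c σ := by
    rintro ⟨θ, hθ⟩ x
    set E : ℂ := Complex.exp ((θ:ℂ) * Complex.I) with hE
    have hE0 : E ≠ 0 := Complex.exp_ne_zero _
    have hcBiE : c.toFun Bi = E⁻¹ • Bi := by
      refine left_inv_eq_right_inv hcBi_l ?_
      rw [hθ, smul_mul_assoc, mul_smul_comm, smul_smul, mul_inv_cancel₀ hE0,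
        one_smul, hBBi]
    rw [hσ, hσ, c.invol, c.map_mul', c.map_mul', c.invol, hθ, hcBiE]
    rw [smul_mul_assoc, smul_mul_assoc, mul_smul_comm, smul_smul,
      mul_inv_cancel₀ hE0, one_smul]
  refine ⟨⟨hforward, hbackward⟩, ?_, ?_⟩
  -- Part 2
  · intro hadm
    obtain ⟨θ, hθ⟩ := hforward hadm
    set E : ℂ := Complex.exp ((θ:ℂ) * Complex.I) with hE
    have hE0 : E ≠ 0 := Complex.exp_ne_zero _
    have hBsq : B * B = algebraMap ℂ (CCl Q) (E⁻¹ * ((l:ℝ):ℂ)) := by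
      have h := hbc
      rw [hθ, mul_smul_comm] at h
      have h2 := congrArg (fun y => E⁻¹ • y) h
      simp only [smul_smul, inv_mul_cancel₀ hE0, one_smul] at h2
      rw [h2, Algebra.smul_def, ← map_mul]
    set r : ℝ := (Real.sqrt |l|)⁻¹ with hr
    have hrpos : 0 < Real.sqrt |l| := Real.sqrt_pos.mpr (abs_pos.mpr hl)
    have hr0 : r ≠ 0 := inv_ne_zero (ne_of_gt hrpos)
    set μ : ℂ := (r:ℂ) * Complex.exp (((θ/2 : ℝ):ℂ) * Complex.I) with hμ
    have hμ0 : μ ≠ 0 :=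
      mul_ne_zero (Complex.ofReal_ne_zero.mpr hr0) (Complex.exp_ne_zero _)
    have hconjμ : (starRingEnd ℂ) μ * E = μ := by
      rw [hμ, map_mul, Complex.conj_ofReal, ← Complex.exp_conj, map_mul,
        Complex.conj_ofReal, Complex.conj_I, hE, mul_assoc, ← Complex.exp_add]
      congr 2
      push_cast
      ring
    have hEhalf : μ * μ = (r:ℂ)^2 * E := by
      have harg : ((θ/2 : ℝ):ℂ) * Complex.I + ((θ/2 : ℝ):ℂ) * Complex.I
          = (θ:ℂ) * Complex.I := by push_cast; ring
      rw [hμ, mul_mul_mul_comm, ← Complex.exp_add, harg, ← hE, sq]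
    have hrl : r^2 * l = 1 ∨ r^2 * l = -1 := by
      have hsqr : r^2 = |l|⁻¹ := by
        rw [hr, inv_pow, Real.sq_sqrt (abs_nonneg l)]
      rcases abs_cases l with ⟨h1, _⟩ | ⟨h1, _⟩
      · left; rw [hsqr, h1, inv_mul_cancel₀ hl]
      · right
        rw [hsqr, h1]
        field_simp
    have hvalue : μ * μ * (E⁻¹ * ((l:ℝ):ℂ)) = ((r^2 * l : ℝ):ℂ) := by
      rw [hEhalf]
      have : (r:ℂ)^2 * E * (E⁻¹ * ((l:ℝ):ℂ))
          = (r:ℂ)^2 * ((l:ℝ):ℂ) * (E * E⁻¹) := by ring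
      rw [this, mul_inv_cancel₀ hE0, mul_one]
      push_cast
      ring
    refine ⟨μ, hμ0, ?_, ?_, ?_⟩
    · rw [c.map_smul', hθ, smul_smul, hconjμ]
    · have hsq2 : (μ • B) * (μ • B) = algebraMap ℂ (CCl Q) ((r^2 * l : ℝ):ℂ) := by
        rw [smul_mul_assoc, mul_smul_comm, smul_smul, hBsq, Algebra.smul_def,
          ← map_mul, hvalue]
      rcases hrl with h | h
      · left; rw [hsq2, h]; simp
      · right; rw [hsq2, h]; simp
    · intro x
      rw [hσ, mul_smul_comm, mul_assoc (B * c.toFun x) Bi B, hBiB, mul_one,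
        smul_mul_assoc]
  -- Part 3
  · intro b' h1 h2 h3
    obtain ⟨ε, hεpm, hε⟩ : ∃ ε : ℂ,
        (ε = 1 ∨ ε = -1) ∧ b' * b' = algebraMap ℂ (CCl Q) ε := by
      rcases h2 with h | h
      · exact ⟨1, Or.inl rfl, by rw [h, map_one]⟩
      · exact ⟨-1, Or.inr rfl, by rw [h, map_neg, map_one]⟩
    have hε2 : ε * ε = 1 := by rcases hεpm with rfl | rfl <;> ring
    set bi' : CCl Q := ε • b' with hbi'
    have hr1 : b' * bi' = 1 := by
      rw [hbi', mul_smul_comm, hε, Algebra.smul_def, ← map_mul, hε2, map_one]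
    have hl1 : bi' * b' = 1 := by
      rw [hbi', smul_mul_assoc, hε, Algebra.smul_def, ← map_mul, hε2, map_one]
    have hb'ι : ∀ m : ℂ ⊗[ℝ] V, b' * CliffordAlgebra.ι (Q.baseChange ℂ) m
        = (B * CliffordAlgebra.ι (Q.baseChange ℂ) m * Bi) * b' := by
      intro m
      have h := h3 (c.toFun (CliffordAlgebra.ι (Q.baseChange ℂ) m))
      rw [c.invol, hσ, c.invol] at h
      exact h
    have hconj : ∀ m : ℂ ⊗[ℝ] V,
        b' * CliffordAlgebra.ι (Q.baseChange ℂ) m * bi'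
          = B * CliffordAlgebra.ι (Q.baseChange ℂ) m * Bi := by
      intro m
      have h := congrArg (fun y => y * bi') (hb'ι m)
      rw [mul_assoc (B * CliffordAlgebra.ι (Q.baseChange ℂ) m * Bi) b' bi',
        hr1, mul_one] at h
      exact h
    obtain ⟨lam, hlam⟩ := hcent (Bi * b')
      (fun m => (central_of_conj_eq hl1 hBiB _ (hconj m)).symm)
    have hb'B : b' = lam • B := by
      have h : B * (Bi * b') = b' := by rw [← mul_assoc, hBBi, one_mul]
      rw [← h, hlam, mul_algebraMap_eq_smul]
    have hlam0 : lam ≠ 0 := by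
      intro h0
      rw [h0, zero_smul] at hb'B
      rw [hb'B, zero_mul] at hr1
      exact zero_ne_one hr1
    -- reverse
    set R' : CCl Q := CliffordAlgebra.reverse b' with hR'
    have hrr : R' * R' = algebraMap ℂ (CCl Q) ε := by
      have h := congrArg (CliffordAlgebra.reverse (Q := Q.baseChange ℂ)) hε
      rw [CliffordAlgebra.reverse.map_mul, CliffordAlgebra.reverse.commutes] at h
      exact h
    set Ri' : CCl Q := ε • R' with hRi'
    have hrr1 : R' * Ri' = 1 := by
      rw [hRi', mul_smul_comm, hrr, Algebra.smul_def, ← map_mul, hε2, map_one]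
    have hrl1 : Ri' * R' = 1 := by
      rw [hRi', smul_mul_assoc, hrr, Algebra.smul_def, ← map_mul, hε2, map_one]
    have hrevconj : ∀ m : ℂ ⊗[ℝ] V,
        Ri' * CliffordAlgebra.ι (Q.baseChange ℂ) m * R'
          = b' * CliffordAlgebra.ι (Q.baseChange ℂ) m * bi' := by
      intro m
      obtain ⟨m', hm'⟩ := hb (CliffordAlgebra.ι (Q.baseChange ℂ) m) ⟨m, rfl⟩
      have heq : b' * CliffordAlgebra.ι (Q.baseChange ℂ) m * bi'
          = CliffordAlgebra.ι (Q.baseChange ℂ) m' := by rw [hconj m, hm']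
      have h := congrArg (CliffordAlgebra.reverse (Q := Q.baseChange ℂ)) heq
      rw [CliffordAlgebra.reverse.map_mul, CliffordAlgebra.reverse.map_mul,
        CliffordAlgebra.reverse_ι, CliffordAlgebra.reverse_ι] at h
      rw [hbi', map_smul] at h
      rw [← mul_assoc] at h
      have hgoal : Ri' * CliffordAlgebra.ι (Q.baseChange ℂ) m * R'
          = CliffordAlgebra.ι (Q.baseChange ℂ) m' := by
        rw [hRi', hR']
        exact h
      rw [hgoal, heq]
    obtain ⟨kap', hkap'⟩ := hcent (bi' * Ri')
      (fun m => (central_of_conj_eq hrr1 hl1 _ (hrevconj m)).symm)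
    have hRi'_eq : Ri' = kap' • b' := by
      have h : b' * (bi' * Ri') = Ri' := by rw [← mul_assoc, hr1, one_mul]
      rw [← h, hkap', mul_algebraMap_eq_smul]
    set kap : ℂ := ε * kap' with hkap
    have hR'_eq : R' = kap • b' := by
      have h : R' = ε • Ri' := by rw [hRi', smul_smul, hε2, one_smul]
      rw [h, hRi'_eq, smul_smul, hkap]
    have hkap2 : kap * kap = 1 := by
      have h := CliffordAlgebra.reverse_reverse (Q := Q.baseChange ℂ) b'
      rw [← hR', hR'_eq, map_smul, ← hR', hR'_eq, smul_smul] at h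
      have h2 := congrArg (fun y => y * bi') h
      simp only [smul_mul_assoc, hr1] at h2
      apply hinj
      rw [← smul_one_eq_algebraMap, h2, map_one]
    have hkappm : kap = 1 ∨ kap = -1 := mul_self_eq_one_iff.mp hkap2
    refine ⟨?_, ?_, ?_, ?_⟩
    · -- c (reverse b') = ± b'
      rcases hkappm with hk | hk
      · left
        rw [hR'_eq, hk, one_smul, h1]
      · right
        rw [hR'_eq, hk, c.map_smul', h1]
        simp
    · -- b' * reverse b' = ±1
      have h : b' * R' = algebraMap ℂ (CCl Q) (kap * ε) := by
        rw [hR'_eq, mul_smul_comm, hε, Algebra.smul_def, ← map_mul]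
      have hke : kap * ε = 1 ∨ kap * ε = -1 := by
        rcases hkappm with hk | hk <;> rcases hεpm with he | he <;> rw [hk, he] <;> norm_num
      rcases hke with hke | hke
      · left; rw [h, hke, map_one]
      · right; rw [h, hke, map_neg, map_one]
    · -- membership in the Clifford group
      refine ⟨⟨b', bi', hr1, hl1⟩, rfl, ?_⟩
      intro x hx
      obtain ⟨m, rfl⟩ := hx
      show b' * CliffordAlgebra.ι (Q.baseChange ℂ) m * bi' ∈ VC Q
      rw [hconj m]
      exact hb _ ⟨m, rfl⟩
    · -- uniqueness up to sign
      intro b'' h1' h2' h3'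
      have hb''ι : ∀ m : ℂ ⊗[ℝ] V, b'' * CliffordAlgebra.ι (Q.baseChange ℂ) m
          = (B * CliffordAlgebra.ι (Q.baseChange ℂ) m * Bi) * b'' := by
        intro m
        have h := h3' (c.toFun (CliffordAlgebra.ι (Q.baseChange ℂ) m))
        rw [c.invol, hσ, c.invol] at h
        exact h
      obtain ⟨ε', hε'pm, hε'⟩ : ∃ ε' : ℂ,
          (ε' = 1 ∨ ε' = -1) ∧ b'' * b'' = algebraMap ℂ (CCl Q) ε' := by
        rcases h2' with h | h
        · exact ⟨1, Or.inl rfl, by rw [h, map_one]⟩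
        · exact ⟨-1, Or.inr rfl, by rw [h, map_neg, map_one]⟩
      have hε'2 : ε' * ε' = 1 := by rcases hε'pm with rfl | rfl <;> ring
      have hr1' : b'' * (ε' • b'') = 1 := by
        rw [mul_smul_comm, hε', Algebra.smul_def, ← map_mul, hε'2, map_one]
      have hl1' : (ε' • b'') * b'' = 1 := by
        rw [smul_mul_assoc, hε', Algebra.smul_def, ← map_mul, hε'2, map_one]
      have hconj' : ∀ m : ℂ ⊗[ℝ] V,
          b'' * CliffordAlgebra.ι (Q.baseChange ℂ) m * (ε' • b'')
            = B * CliffordAlgebra.ι (Q.baseChange ℂ) m * Bi := by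
        intro m
        have h := congrArg (fun y => y * (ε' • b'')) (hb''ι m)
        rw [mul_assoc (B * CliffordAlgebra.ι (Q.baseChange ℂ) m * Bi) b'' (ε' • b''),
          hr1', mul_one] at h
        exact h
      obtain ⟨lam'', hlam''⟩ := hcent (Bi * b'')
        (fun m => (central_of_conj_eq hl1' hBiB _ (hconj' m)).symm)
      have hb''B : b'' = lam'' • B := by
        have h : B * (Bi * b'') = b'' := by rw [← mul_assoc, hBBi, one_mul]
        rw [← h, hlam'', mul_algebraMap_eq_smul]
      set kap2 : ℂ := lam'' * lam⁻¹ with hkap2def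
      have hb''b' : b'' = kap2 • b' := by
        have hBb' : B = lam⁻¹ • b' := by
          rw [hb'B, smul_smul, inv_mul_cancel₀ hlam0, one_smul]
        rw [hb''B, hBb', smul_smul]
      have hkreal : kap2 = ((kap2.re : ℝ) : ℂ) := by
        have h := h1'
        rw [hb''b', c.map_smul', h1] at h
        have h2 := congrArg (fun y => y * bi') h
        simp only [smul_mul_assoc, hr1] at h2
        have h3 : (starRingEnd ℂ) kap2 = kap2 := by
          apply hinj
          rw [← smul_one_eq_algebraMap, h2, smul_one_eq_algebraMap]
        exact (Complex.conj_eq_iff_re.mp h3).symm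
      have hsq'' : kap2 * kap2 * ε = ε' := by
        have h := hε'
        rw [hb''b', smul_mul_assoc, mul_smul_comm, smul_smul, hε,
          Algebra.smul_def, ← map_mul] at h
        exact hinj h
      have hk21 : kap2 * kap2 = 1 := by
        have h : kap2 * kap2 = ε' * ε := by
          have h0 := congrArg (fun y => y * ε) hsq''
          simpa [mul_assoc, hε2] using h0
        have hpm : kap2 * kap2 = 1 ∨ kap2 * kap2 = -1 := by
          rcases hε'pm with rfl | rfl <;> rcases hεpm with rfl | rfl <;> rw [h] <;> norm_num
        rcases hpm with hpm | hpm
        · exact hpm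
        · exfalso
          rw [hkreal] at hpm
          have h4 : ((kap2.re * kap2.re : ℝ) : ℂ) = ((-1 : ℝ) : ℂ) := by
            push_cast
            linear_combination hpm
          have h5 : kap2.re * kap2.re = -1 := Complex.ofReal_injective h4
          nlinarith [mul_self_nonneg kap2.re]
      rcases mul_self_eq_one_iff.mp hk21 with hk | hk
      · left; rw [hb''b', hk, one_smul]
      · right; rw [hb''b', hk, neg_one_smul]
end
end

section
/- Let K be a finite-dimensional complex vector space equipped with a nondegenerate hermitian form (·,·), and suppose there exists U ∈ End(K) such that U^× U = −id_K, where U^× denotes the adjoint of U with respect to (·,·). Then (·,·) is neutral: its positive and negative indices of inertia are equal. -/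
noncomputable section

/-- A hermitian sesquilinear form (conjugate-linear in the first argument). -/
structure SesqForm (K : Type*) [AddCommGroup K] [Module ℂ K] where
  form : K → K → ℂ
  add_left : ∀ x y z : K, form (x + y) z = form x z + form y z
  add_right : ∀ x y z : K, form x (y + z) = form x y + form x z
  smul_left : ∀ (a : ℂ) (x y : K), form (a • x) y = starRingEnd ℂ a * form x y
  smul_right : ∀ (a : ℂ) (x y : K), form x (a • y) = a * form x y
  herm : ∀ x y : K, form y x = starRingEnd ℂ (form x y)

section KreinDefs

variable {K : Type*} [AddCommGroup K] [Module ℂ K]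

/-- Nondegeneracy: a nondegenerate hermitian form is a Krein product. -/
def SesqForm.Nondeg (h : SesqForm K) : Prop :=
  ∀ x : K, (∀ y : K, h.form x y = 0) → x = 0

/-- Positive definiteness of a sesquilinear form. -/
def FPosDef (f : K → K → ℂ) : Prop := ∀ x : K, x ≠ 0 → ∃ r : ℝ, 0 < r ∧ f x x = r

/-- Negative definiteness of a sesquilinear form. -/
def FNegDef (f : K → K → ℂ) : Prop := ∀ x : K, x ≠ 0 → ∃ r : ℝ, r < 0 ∧ f x x = r

/-- Definiteness of a sesquilinear form. -/
def FDefinite (f : K → K → ℂ) : Prop := FPosDef f ∨ FNegDef f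

/-- `f` is neutral: it admits an orthogonal decomposition into a positive definite
and a negative definite part of equal dimensions (equal indices of inertia). -/
def FNeutral (f : K → K → ℂ) : Prop :=
  ∃ P N : Submodule ℂ K, P ⊓ N = ⊥ ∧ P ⊔ N = ⊤
    ∧ (∀ x ∈ P, ∀ y ∈ N, f x y = 0)
    ∧ (∀ x ∈ P, x ≠ 0 → ∃ r : ℝ, 0 < r ∧ f x x = r)
    ∧ (∀ y ∈ N, y ≠ 0 → ∃ r : ℝ, r < 0 ∧ f y y = r)
    ∧ Module.finrank ℂ P = Module.finrank ℂ N

end KreinDefs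

open scoped InnerProductSpace in
lemma decomp {n : ℕ} (h : SesqForm (EuclideanSpace ℂ (Fin n))) (hnd : h.Nondeg) :
    ∃ P N : Submodule ℂ (EuclideanSpace ℂ (Fin n)),
      P ⊓ N = ⊥ ∧ P ⊔ N = ⊤ ∧ (∀ x ∈ P, ∀ y ∈ N, h.form x y = 0)
      ∧ (∀ x ∈ P, x ≠ 0 → ∃ r : ℝ, 0 < r ∧ h.form x x = r)
      ∧ (∀ y ∈ N, y ≠ 0 → ∃ r : ℝ, r < 0 ∧ h.form y y = r) := by
  classical
  set E := EuclideanSpace ℂ (Fin n) with hE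
  -- the operator A with ⟪A y, x⟫ = h.form y x
  let L : E → (E →ₗ[ℂ] ℂ) := fun y =>
    { toFun := fun x => h.form y x
      map_add' := fun a b => h.add_right y a b
      map_smul' := fun a x => h.smul_right a y x }
  let A : E →ₗ[ℂ] E :=
    { toFun := fun y => (InnerProductSpace.toDual ℂ E).symm ((L y).toContinuousLinearMap)
      map_add' := by
        intro y z
        have hL : (L (y + z)).toContinuousLinearMap
            = (L y).toContinuousLinearMap + (L z).toContinuousLinearMap :=
          ContinuousLinearMap.ext fun x => h.add_left y z x
        show (InnerProductSpace.toDual ℂ E).symm _ = _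
        rw [hL, map_add]
      map_smul' := by
        intro a y
        have hL : (L (a • y)).toContinuousLinearMap
            = starRingEnd ℂ a • (L y).toContinuousLinearMap := by
          apply ContinuousLinearMap.ext
          intro x
          simp [L, h.smul_left]
        show (InnerProductSpace.toDual ℂ E).symm _ = _
        rw [hL, map_smulₛₗ]
        simp }
  have hA1 : ∀ y x : E, ⟪A y, x⟫_ℂ = h.form y x := by
    intro y x
    have : InnerProductSpace.toDual ℂ E (A y) = (L y).toContinuousLinearMap := by
      simp [A]
    rw [← InnerProductSpace.toDual_apply_apply, this]
    rfl
  have hform : ∀ x y : E, h.form x y = ⟪x, A y⟫_ℂ := by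
    intro x y
    rw [← inner_conj_symm, hA1, ← h.herm]
  have hAsym : A.IsSymmetric := by
    intro x y
    rw [hA1, hform]
  have hfr : Module.finrank ℂ E = n := finrank_euclideanSpace_fin
  let b := hAsym.eigenvectorBasis hfr
  let μ := hAsym.eigenvalues hfr
  have hAb : ∀ i, A (b i) = (μ i : ℂ) • b i := fun i => hAsym.apply_eigenvectorBasis hfr i
  -- form on basis vectors
  have hrepr : ∀ (y : E) (i : Fin n), b.repr (A y) i = (μ i : ℂ) * b.repr y i := by
    intro y i
    rw [b.repr_apply_apply, b.repr_apply_apply, ← hAsym (b i) y, hAb i, inner_smul_left]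
    simp
  have hsum : ∀ x y : E, h.form x y
      = ∑ i, starRingEnd ℂ (b.repr x i) * ((μ i : ℂ) * b.repr y i) := by
    intro x y
    rw [hform, ← b.sum_inner_mul_inner x (A y)]
    congr 1
    ext i
    rw [← hrepr, b.repr_apply_apply, ← b.repr_apply_apply, ← inner_conj_symm (b i) x,
      b.repr_apply_apply]
    simp
  -- eigenvalues are nonzero
  have hmu : ∀ i, μ i ≠ 0 := by
    intro i hi
    have hbz : b i = 0 := by
      apply hnd
      intro y
      rw [← hA1, hAb i, hi]
      simp
    exact (b.toBasis.ne_zero i) (by simpa using hbz)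
  set S : Set (Fin n) := {i | 0 < μ i} with hS
  refine ⟨Submodule.span ℂ (b.toBasis '' S), Submodule.span ℂ (b.toBasis '' Sᶜ), ?_, ?_, ?_, ?_, ?_⟩
  · rw [eq_bot_iff]
    intro x hx
    obtain ⟨h1, h2⟩ := Submodule.mem_inf.mp hx
    rw [Module.Basis.mem_span_image] at h1 h2
    have : b.toBasis.repr x = 0 := by
      ext i
      by_contra hne
      have hi : i ∈ (b.toBasis.repr x).support := Finsupp.mem_support_iff.mpr hne
      exact (h2 hi) (h1 hi)
    simpa using (b.toBasis.repr.map_eq_zero_iff.mp this)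
  · rw [← Submodule.span_union, ← Set.image_union, Set.union_compl_self, Set.image_univ,
      b.toBasis.span_eq]
  · intro x hx y hy
    rw [Module.Basis.mem_span_image] at hx hy
    rw [hsum]
    apply Finset.sum_eq_zero
    intro i _
    by_cases hi : b.repr x i = 0
    · rw [hi]; simp
    · have : i ∈ S := hx (Finsupp.mem_support_iff.mpr (by
        rwa [b.coe_toBasis_repr_apply]))
      have : b.repr y i = 0 := by
        have := Finsupp.notMem_support_iff.mp (fun hc => (hy hc) this)
        rwa [b.coe_toBasis_repr_apply] at this
      rw [this]; ring
  · intro x hx hx0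
    rw [Module.Basis.mem_span_image] at hx
    refine ⟨∑ i, μ i * ‖b.repr x i‖ ^ 2, ?_, ?_⟩
    · apply Finset.sum_pos'
      · intro i _
        by_cases hi : i ∈ S
        · have hμ : (0:ℝ) < μ i := hi
          positivity
        · have : b.toBasis.repr x i = 0 :=
            Finsupp.notMem_support_iff.mp (fun hc => hi (hx hc))
          rw [b.coe_toBasis_repr_apply] at this
          rw [this]; simp
      · have : b.toBasis.repr x ≠ 0 := fun hc => hx0 (by
          simpa using b.toBasis.repr.map_eq_zero_iff.mp hc)
        obtain ⟨j, hj⟩ := Finsupp.ne_iff.mp this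
        simp only [Finsupp.coe_zero, Pi.zero_apply] at hj
        have hjS : j ∈ S := hx (Finsupp.mem_support_iff.mpr hj)
        refine ⟨j, Finset.mem_univ j, ?_⟩
        rw [b.coe_toBasis_repr_apply] at hj
        have : (0:ℝ) < ‖b.repr x j‖ ^ 2 := pow_pos (norm_pos_iff.mpr hj) 2
        have hμ : (0:ℝ) < μ j := hjS
        exact mul_pos hμ this
    · rw [hsum]
      push_cast
      congr 1
      ext i
      have hc : starRingEnd ℂ (b.repr x i) * ((μ i : ℂ) * b.repr x i)
          = (μ i : ℂ) * (starRingEnd ℂ (b.repr x i) * b.repr x i) := by ring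
      rw [hc, ← Complex.normSq_eq_conj_mul_self]
      norm_cast
      rw [Complex.normSq_eq_norm_sq]
  · intro y hy hy0
    rw [Module.Basis.mem_span_image] at hy
    refine ⟨∑ i, μ i * ‖b.repr y i‖ ^ 2, ?_, ?_⟩
    · have : (0:ℝ) < ∑ i, -(μ i * ‖b.repr y i‖ ^ 2) := by
        apply Finset.sum_pos'
        · intro i _
          by_cases hi : i ∈ Sᶜ
          · have hneg : μ i < 0 := by
              rcases lt_trichotomy (μ i) 0 with h' | h' | h'
              · exact h'
              · exact absurd h' (hmu i)
              · exact absurd h' hi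
            have : (0:ℝ) ≤ ‖b.repr y i‖ ^ 2 := by positivity
            nlinarith
          · have : b.toBasis.repr y i = 0 :=
              Finsupp.notMem_support_iff.mp (fun hc => hi (hy hc))
            rw [b.coe_toBasis_repr_apply] at this
            rw [this]; simp
        · have : b.toBasis.repr y ≠ 0 := fun hc => hy0 (by
            simpa using b.toBasis.repr.map_eq_zero_iff.mp hc)
          obtain ⟨j, hj⟩ := Finsupp.ne_iff.mp this
          simp only [Finsupp.coe_zero, Pi.zero_apply] at hj
          have hjS : j ∈ Sᶜ := hy (Finsupp.mem_support_iff.mpr hj)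
          have hneg : μ j < 0 := by
            rcases lt_trichotomy (μ j) 0 with h' | h' | h'
            · exact h'
            · exact absurd h' (hmu j)
            · exact absurd h' hjS
          refine ⟨j, Finset.mem_univ j, ?_⟩
          rw [b.coe_toBasis_repr_apply] at hj
          have : (0:ℝ) < ‖b.repr y j‖ ^ 2 := pow_pos (norm_pos_iff.mpr hj) 2
          nlinarith
      rw [Finset.sum_neg_distrib] at this
      linarith
    · rw [hsum]
      push_cast
      congr 1
      ext i
      have hc : starRingEnd ℂ (b.repr y i) * ((μ i : ℂ) * b.repr y i)
          = (μ i : ℂ) * (starRingEnd ℂ (b.repr y i) * b.repr y i) := by ring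
      rw [hc, ← Complex.normSq_eq_conj_mul_self]
      norm_cast
      rw [Complex.normSq_eq_norm_sq]

/-- If a finite-dimensional complex vector space `K` with a nondegenerate
hermitian form carries an endomorphism `U` with `U^× U = −id`, then the form is neutral. -/
theorem statement7 {K : Type*} [AddCommGroup K] [Module ℂ K] [FiniteDimensional ℂ K]
    (h : SesqForm K) (hnd : h.Nondeg)
    (U Uadj : K →ₗ[ℂ] K)
    (hadj : ∀ x y : K, h.form (U x) y = h.form x (Uadj y))
    (hUU : ∀ x : K, Uadj (U x) = -x) :
    FNeutral h.form := by
  classical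
  set n := Module.finrank ℂ K with hn
  let e : K ≃ₗ[ℂ] EuclideanSpace ℂ (Fin n) :=
    LinearEquiv.ofFinrankEq _ _ (by simp [finrank_euclideanSpace_fin, hn])
  let h' : SesqForm (EuclideanSpace ℂ (Fin n)) :=
    { form := fun x y => h.form (e.symm x) (e.symm y)
      add_left := fun x y z => by simp only [map_add]; exact h.add_left _ _ _
      add_right := fun x y z => by simp only [map_add]; exact h.add_right _ _ _
      smul_left := fun a x y => by simp only [map_smul]; exact h.smul_left _ _ _
      smul_right := fun a x y => by simp only [map_smul]; exact h.smul_right _ _ _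
      herm := fun x y => h.herm _ _ }
  have hnd' : h'.Nondeg := by
    intro x hx
    have h0 : e.symm x = 0 := by
      apply hnd
      intro y
      have := hx (e y)
      simpa [h'] using this
    have := congrArg e h0
    simpa using this
  obtain ⟨P', N', hinf, hsup, hortho, hpos, hneg⟩ := decomp h' hnd'
  let P : Submodule ℂ K := P'.map (e.symm : EuclideanSpace ℂ (Fin n) →ₗ[ℂ] K)
  let N : Submodule ℂ K := N'.map (e.symm : EuclideanSpace ℂ (Fin n) →ₗ[ℂ] K)
  have hmemP : ∀ x : K, x ∈ P ↔ e x ∈ P' := fun x => by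
    simp only [P, Submodule.mem_map_equiv, LinearEquiv.symm_symm]
  have hmemN : ∀ x : K, x ∈ N ↔ e x ∈ N' := fun x => by
    simp only [N, Submodule.mem_map_equiv, LinearEquiv.symm_symm]
  have hformP : ∀ x y : K, h.form x y = h'.form (e x) (e y) := by
    intro x y
    simp [h']
  have hPN : P ⊓ N = ⊥ := by
    rw [eq_bot_iff]
    intro x hx
    obtain ⟨h1, h2⟩ := Submodule.mem_inf.mp hx
    rw [hmemP] at h1
    rw [hmemN] at h2
    have : e x ∈ P' ⊓ N' := Submodule.mem_inf.mpr ⟨h1, h2⟩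
    rw [hinf, Submodule.mem_bot] at this
    have := e.injective (by simpa using this : e x = e 0)
    simpa using this
  have hPN2 : P ⊔ N = ⊤ := by
    have : P ⊔ N = (P' ⊔ N').map (e.symm : EuclideanSpace ℂ (Fin n) →ₗ[ℂ] K) :=
      (Submodule.map_sup _ _ _).symm
    rw [this, hsup, Submodule.map_top]
    rw [LinearMap.range_eq_top]
    exact e.symm.surjective
  have horthoK : ∀ x ∈ P, ∀ y ∈ N, h.form x y = 0 := by
    intro x hx y hy
    rw [hformP]
    exact hortho _ ((hmemP x).mp hx) _ ((hmemN y).mp hy)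
  have hposK : ∀ x ∈ P, x ≠ 0 → ∃ r : ℝ, 0 < r ∧ h.form x x = r := by
    intro x hx hx0
    rw [hformP]
    exact hpos _ ((hmemP x).mp hx) (fun hc => hx0 (by simpa using congrArg e.symm hc))
  have hnegK : ∀ y ∈ N, y ≠ 0 → ∃ r : ℝ, r < 0 ∧ h.form y y = r := by
    intro y hy hy0
    rw [hformP]
    exact hneg _ ((hmemN y).mp hy) (fun hc => hy0 (by simpa using congrArg e.symm hc))
  -- key sign identity
  have hkey : ∀ x : K, h.form (U x) (U x) = - h.form x x := by
    intro x
    rw [hadj, hUU]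
    have : (-x : K) = (-1 : ℂ) • x := by simp
    rw [this, h.smul_right]
    ring
  have hUinj : ∀ x : K, U x = 0 → x = 0 := by
    intro x hx
    have h1 := hUU x
    rw [hx, map_zero] at h1
    exact neg_eq_zero.mp h1.symm
  have hcompl : IsCompl P N := ⟨disjoint_iff.mpr hPN, codisjoint_iff.mpr hPN2⟩
  -- injection P → N
  let φ : P →ₗ[ℂ] N := (N.linearProjOfIsCompl P hcompl.symm).comp (U.comp P.subtype)
  have hφinj : Function.Injective φ := by
    rw [← LinearMap.ker_eq_bot, LinearMap.ker_eq_bot']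
    rintro ⟨x, hxP⟩ hx
    have hUxP : U x ∈ P :=
      (Submodule.linearProjOfIsCompl_apply_eq_zero_iff hcompl.symm).mp hx
    by_contra hne
    have hx0 : x ≠ 0 := fun hc => hne (by simp [hc])
    have hUx0 : U x ≠ 0 := fun hc => hx0 (hUinj x hc)
    obtain ⟨r, hr, hfxx⟩ := hposK x hxP hx0
    obtain ⟨r', hr', hfUx⟩ := hposK (U x) hUxP hUx0
    have hk := hkey x
    rw [hfUx, hfxx] at hk
    have : r' = -r := by exact_mod_cast hk
    linarith
  let ψ : N →ₗ[ℂ] P := (P.linearProjOfIsCompl N hcompl).comp (U.comp N.subtype)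
  have hψinj : Function.Injective ψ := by
    rw [← LinearMap.ker_eq_bot, LinearMap.ker_eq_bot']
    rintro ⟨x, hxN⟩ hx
    have hUxN : U x ∈ N :=
      (Submodule.linearProjOfIsCompl_apply_eq_zero_iff hcompl).mp hx
    by_contra hne
    have hx0 : x ≠ 0 := fun hc => hne (by simp [hc])
    have hUx0 : U x ≠ 0 := fun hc => hx0 (hUinj x hc)
    obtain ⟨r, hr, hfxx⟩ := hnegK x hxN hx0
    obtain ⟨r', hr', hfUx⟩ := hnegK (U x) hUxN hUx0
    have hk := hkey x
    rw [hfUx, hfxx] at hk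
    have : r' = -r := by exact_mod_cast hk
    linarith
  have hle1 : Module.finrank ℂ P ≤ Module.finrank ℂ N :=
    LinearMap.finrank_le_finrank_of_injective hφinj
  have hle2 : Module.finrank ℂ N ≤ Module.finrank ℂ P :=
    LinearMap.finrank_le_finrank_of_injective hψinj
  exact ⟨P, N, hPN, hPN2, horthoK, hposK, hnegK, le_antisymm hle1 hle2⟩
end
end

section
/- Let K be a finite-dimensional complex vector space with a nondegenerate hermitian form (·,·), and let A ↦ A^× denote the adjoint with respect to (·,·). Let (·,·)′ be any hermitian sesquilinear form on K such that (Aψ, φ)′ = (ψ, A^×φ)′ for all ψ, φ ∈ K and all A ∈ End(K). Then there exists λ ∈ ℝ such that (·,·)′ = λ(·,·). -/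
noncomputable section

/-- Let `(·,·)` be a nondegenerate hermitian form on a finite-dimensional
complex space `K`, with adjoint operation `A ↦ A^×`. Any hermitian sesquilinear form `(·,·)′`
satisfying `(Aψ,φ)′ = (ψ, A^×φ)′` for every endomorphism `A` is a real multiple of `(·,·)`. -/
theorem statement10 {K : Type*} [AddCommGroup K] [Module ℂ K] [FiniteDimensional ℂ K]
    (h : SesqForm K) (hnd : h.Nondeg)
    (adj : (K →ₗ[ℂ] K) → (K →ₗ[ℂ] K))
    (hadj : ∀ (A : K →ₗ[ℂ] K) (x y : K), h.form (A x) y = h.form x (adj A y))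
    (h' : SesqForm K)
    (hcompat : ∀ (A : K →ₗ[ℂ] K) (x y : K), h'.form (A x) y = h'.form x (adj A y)) :
    ∃ l : ℝ, ∀ x y : K, h'.form x y = (l : ℂ) * h.form x y := by
  classical
  -- nondegeneracy in the second slot
  have hnd2 : ∀ y : K, (∀ x : K, h.form x y = 0) → y = 0 := by
    intro y hy
    apply hnd y
    intro x
    rw [h.herm, hy x]
    simp
  -- subtraction in second slot
  have hsub : ∀ x y z : K, h.form x (y - z) = h.form x y - h.form x z := by
    intro x y z
    have : y - z = y + (-1 : ℂ) • z := by
      simp [sub_eq_add_neg]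
    rw [this, h.add_right, h.smul_right]
    ring
  -- rank-one operators
  let A : K → K → (K →ₗ[ℂ] K) := fun u v =>
    { toFun := fun x => h.form u x • v
      map_add' := by
        intro x y
        show h.form u (x + y) • v = _
        rw [h.add_right, add_smul]
      map_smul' := by
        intro a x
        show h.form u (a • x) • v = _
        rw [h.smul_right, RingHom.id_apply, mul_smul] }
  have hAapp : ∀ u v x : K, (A u v) x = h.form u x • v := fun _ _ _ => rfl
  -- the adjoint of A u v is A v u
  have hAadj : ∀ u v z : K, adj (A u v) z = (A v u) z := by
    intro u v z
    have hz : ∀ w : K, h.form w (adj (A u v) z - (A v u) z) = 0 := by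
      intro w
      rw [hsub]
      have h1 := hadj (A u v) w z
      rw [hAapp, h.smul_left] at h1
      rw [← h1, hAapp, h.smul_right]
      rw [h.herm w u, Complex.conj_conj] at h1
      rw [h.herm w u, Complex.conj_conj]
      ring
    have := hnd2 _ hz
    exact sub_eq_zero.mp this
  -- the key identity
  have key : ∀ x u v y : K, h.form x u * h'.form v y = h.form v y * h'.form x u := by
    intro x u v y
    have h1 := hcompat (A u v) x y
    rw [hAapp, h'.smul_left, hAadj, hAapp, h'.smul_right, h.herm x u, Complex.conj_conj] at h1
    linear_combination h1
  by_cases hz : ∀ x u : K, h.form x u = 0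
  · refine ⟨0, fun x y => ?_⟩
    have hx : x = 0 := hnd x (fun y => by rw [h.herm, hz y x]; simp)
    have : h'.form x y = h'.form ((0 : ℂ) • x) y := by rw [hx]; simp
    rw [this, h'.smul_left]
    simp
  · push_neg at hz
    obtain ⟨x0, u0, hc⟩ := hz
    set c := h.form x0 u0 with hc_def
    set μ : ℂ := h'.form x0 u0 / c with hμ
    have hall : ∀ v y : K, h'.form v y = μ * h.form v y := by
      intro v y
      have := key x0 u0 v y
      field_simp [hμ]
      linear_combination c⁻¹ * this - h'.form v y * (mul_inv_cancel₀ hc)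
    -- μ is real
    have hreal : (starRingEnd ℂ) μ = μ := by
      have h1 : h'.form u0 x0 = μ * h.form u0 x0 := hall u0 x0
      have h2 : (starRingEnd ℂ) (h'.form x0 u0) = μ * (starRingEnd ℂ) c := by
        rw [← h'.herm, h1, h.herm]
      have h3 : (starRingEnd ℂ) (h'.form x0 u0) = (starRingEnd ℂ) μ * (starRingEnd ℂ) c := by
        rw [hall x0 u0, map_mul]
      have hcc : (starRingEnd ℂ) c ≠ 0 := by
        simpa using hc
      have h4 := h2.symm.trans h3
      exact (mul_right_cancel₀ hcc h4).symm
    refine ⟨μ.re, fun x y => ?_⟩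
    have : (μ.re : ℂ) = μ := Complex.conj_eq_iff_re.mp hreal
    rw [this]
    exact hall x y
end
end

section
/- Let v ∈ V with Q(v) ≠ 0, let L = ℝv, and let s_L denote the Q-orthogonal symmetry with respect to L (the linear map equal to the identity on L and to minus the identity on the Q-orthogonal complement of L). Let ω = e₁⋯e_n be the volume element associated with a pseudo-orthonormal basis of V. Then Ad_v ∘ c is the unique admissible real structure on ℂl(V) whose restriction to V equals s_L, and Ad_{ωv} ∘ c is the unique admissible real structure on ℂl(V) whose restriction to V equals −s_L. -/
noncomputable section

open TensorProduct

variable {V : Type*} [AddCommGroup V] [Module ℝ V]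

namespace Aux
variable {Q : QuadraticForm ℝ V}

variable {Q : QuadraticForm ℝ V}

instance instTowerCCl : IsScalarTower ℝ (CCl Q) (CCl Q) := IsScalarTower.right
instance instCommCCl : SMulCommClass ℝ (CCl Q) (CCl Q) := Algebra.to_smulCommClass

lemma ir_sq (w : V) : ιr Q w * ιr Q w = algebraMap ℂ _ ((Q w : ℂ)) := by
  rw [ιr, CliffordAlgebra.ι_sq_scalar]; norm_num

lemma ir_anticomm (v w : V) :
    ιr Q v * ιr Q w + ιr Q w * ιr Q v = algebraMap ℂ _ ((QuadraticMap.polar Q v w : ℝ) : ℂ) := by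
  rw [ιr, ιr, CliffordAlgebra.ι_mul_ι_add_swap]
  congr 1
  simp [QuadraticMap.polar, ← TensorProduct.tmul_add]

lemma ir_add (w w' : V) : ιr Q (w + w') = ιr Q w + ιr Q w' := by
  simp [ιr, TensorProduct.tmul_add]

lemma ir_smul (r : ℝ) (w : V) : ιr Q (r • w) = r • ιr Q w := by
  rw [ιr, TensorProduct.tmul_smul, LinearMap.map_smul_of_tower _ r _]; rfl

lemma ir_neg (w : V) : ιr Q (-w) = -ιr Q w := by
  have := ir_smul (Q := Q) (-1) w; rw [neg_one_smul ℝ w] at this; rw [this]; exact neg_one_smul ℝ _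

/-- `ιr` as an `ℝ`-linear map. -/
def ιrL (Q : QuadraticForm ℝ V) : V →ₗ[ℝ] CCl Q where
  toFun := ιr Q
  map_add' := ir_add
  map_smul' := ir_smul

lemma ι_mem_span (m : ℂ ⊗[ℝ] V) :
    CliffordAlgebra.ι (Q.baseChange ℂ) m ∈ Submodule.span ℂ (Set.range (ιr Q)) := by
  induction m using TensorProduct.induction_on with
  | zero => simp
  | tmul z w =>
      have h1 : (z ⊗ₜ[ℝ] w : ℂ ⊗[ℝ] V) = z • ((1:ℂ) ⊗ₜ[ℝ] w) := by
        rw [smul_tmul']; simp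
      rw [h1, map_smul]
      exact Submodule.smul_mem _ _ (Submodule.subset_span ⟨w, rfl⟩)
  | add x y hx hy => rw [map_add]; exact add_mem hx hy

lemma mem_span_of_mem_VC {x : CCl Q} (hx : x ∈ VC Q) :
    x ∈ Submodule.span ℂ (Set.range (ιr Q)) := by
  obtain ⟨m, rfl⟩ := hx
  exact ι_mem_span m

lemma ir_sub (w w' : V) : ιr Q (w - w') = ιr Q w - ιr Q w' := by
  have h := ir_add (Q := Q) (w - w') w'
  simp at h
  rw [h]; abel

variable (v : V) (hv : Q v ≠ 0) (sL : V →ₗ[ℝ] V) (hsLv : sL v = v)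
  (hsLperp : ∀ w : V, QuadraticMap.polar Q v w = 0 → sL w = -w)

include hv hsLv hsLperp in
lemma sL_formula (w : V) : sL w = (QuadraticMap.polar Q v w / Q v) • v - w := by
  set a : ℝ := QuadraticMap.polar Q v w / (2 * Q v) with ha
  have hperp : QuadraticMap.polar Q v (w - a • v) = 0 := by
    rw [QuadraticMap.polar_sub_right, QuadraticMap.polar_smul_right, QuadraticMap.polar_self]
    rw [ha, smul_eq_mul, nsmul_eq_mul]; field_simp; ring
  have h1 : sL (w - a • v) = -(w - a • v) := hsLperp _ hperp
  have h2 : sL w = sL (w - a • v) + a • sL v := by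
    rw [← map_smul, ← map_add]; congr 1; abel
  rw [h2, h1, hsLv]
  have : QuadraticMap.polar Q v w / Q v = 2 * a := by rw [ha]; field_simp
  rw [this]
  module

include hv hsLv hsLperp in
lemma sL_invol (w : V) : sL (sL w) = w := by
  rw [sL_formula v hv sL hsLv hsLperp w, map_sub, map_smul, hsLv,
    sL_formula v hv sL hsLv hsLperp w]
  module

include hv hsLv hsLperp in
lemma key_comm (w : V) : ιr Q v * ιr Q w = ιr Q (sL w) * ιr Q v := by
  rw [sL_formula v hv sL hsLv hsLperp w, ir_sub, ir_smul, sub_mul, smul_mul_assoc, ir_sq]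
  have h1 : ιr Q w * ιr Q v =
      algebraMap ℂ _ ((QuadraticMap.polar Q v w : ℝ) : ℂ) - ιr Q v * ιr Q w := by
    rw [eq_sub_iff_add_eq, add_comm]; exact ir_anticomm v w
  rw [h1]
  have h2 : (QuadraticMap.polar Q v w / Q v) • (algebraMap ℂ (CCl Q) ((Q v : ℝ) : ℂ))
      = algebraMap ℂ _ ((QuadraticMap.polar Q v w : ℝ) : ℂ) := by
    erw [← algebraMap_smul ℂ (QuadraticMap.polar Q v w / Q v) (algebraMap ℂ (CCl Q) ((Q v : ℝ) : ℂ)),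
      Algebra.smul_def, ← map_mul]
    congr 1
    push_cast
    have : ((Q v : ℝ) : ℂ) ≠ 0 := Complex.ofReal_ne_zero.mpr hv
    field_simp
    exact mul_div_cancel_right₀ _ this
  rw [h2]
  abel




lemma c_algebraMap (c : RealStructure Q) (z : ℂ) :
    c.toFun (algebraMap ℂ (CCl Q) z) = algebraMap ℂ (CCl Q) (starRingEnd ℂ z) := by
  rw [Algebra.algebraMap_eq_smul_one, Algebra.algebraMap_eq_smul_one, c.map_smul', c.map_one']

lemma frame (c : RealStructure Q) (hc : IsCanonicalC c)
    (g g' : CCl Q) (hgg' : g * g' = 1) (hg'g : g' * g = 1) (hcg : c.toFun g = g)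
    (t : V → V) (ht : ∀ w, t (t w) = w)
    (hgw : ∀ w, g * ιr Q w = ιr Q (t w) * g) :
    (∃ σ : RealStructure Q, ∀ x, σ.toFun x * g = g * c.toFun x) ∧
    (∀ σ : RealStructure Q,
      (Admissible c σ ∧ ∀ w, σ.toFun (ιr Q w) = ιr Q (t w)) ↔
        (∀ x, σ.toFun x * g = g * c.toFun x)) := by
  -- c fixes g'
  have hcg' : c.toFun g' = g' := by
    have h1 : c.toFun g' * g = 1 := by
      rw [← hcg, ← c.map_mul', hg'g, c.map_one']
    calc c.toFun g' = c.toFun g' * (g * g') := by rw [hgg', mul_one]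
      _ = (c.toFun g' * g) * g' := by rw [mul_assoc]
      _ = g' := by rw [h1, one_mul]
  -- g * g is central
  have hsq : ∀ x : CCl Q, (g * g) * x = x * (g * g) := by
    intro x
    induction x using CliffordAlgebra.induction with
    | algebraMap z => exact (Algebra.commutes z (g * g)).symm
    | ι m =>
        have hmem : CliffordAlgebra.ι (Q.baseChange ℂ) m ∈
            Submodule.span ℂ (Set.range (ιr Q)) := ι_mem_span m
        have : ∀ y ∈ Submodule.span ℂ (Set.range (ιr Q)), (g * g) * y = y * (g * g) := by
          intro y hy
          induction hy using Submodule.span_induction with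
          | mem y hy =>
              obtain ⟨w, rfl⟩ := hy
              calc (g * g) * ιr Q w = g * (g * ιr Q w) := by rw [mul_assoc]
                _ = g * (ιr Q (t w) * g) := by rw [hgw]
                _ = (g * ιr Q (t w)) * g := by rw [mul_assoc]
                _ = (ιr Q (t (t w)) * g) * g := by rw [hgw]
                _ = ιr Q w * (g * g) := by rw [ht, mul_assoc]
          | zero => simp
          | add y z _ _ hy hz => rw [mul_add, add_mul, hy, hz]
          | smul z y _ hy => rw [mul_smul_comm, smul_mul_assoc, hy]
        exact this _ hmem
    | mul x y hx hy =>
        calc (g * g) * (x * y) = ((g * g) * x) * y := by noncomm_ring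
          _ = x * ((g * g) * y) := by rw [hx]; noncomm_ring
          _ = (x * y) * (g * g) := by rw [hy]; noncomm_ring
    | add x y hx hy => rw [mul_add, add_mul, hx, hy]
  -- conjugation by g stabilizes V^ℂ
  have hstab : ∀ x ∈ VC Q, g * x * g' ∈ VC Q := by
    intro x hx
    have hx' := mem_span_of_mem_VC hx
    have : ∀ y ∈ Submodule.span ℂ (Set.range (ιr Q)), g * y * g' ∈ VC Q := by
      intro y hy
      induction hy using Submodule.span_induction with
      | mem y hy =>
          obtain ⟨w, rfl⟩ := hy
          have : g * ιr Q w * g' = ιr Q (t w) := by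
            rw [hgw, mul_assoc, hgg', mul_one]
          rw [this]
          exact ⟨_, rfl⟩
      | zero => simpa using (VC Q).zero_mem
      | add y z _ _ hy hz =>
          have : g * (y + z) * g' = g * y * g' + g * z * g' := by noncomm_ring
          rw [this]; exact (VC Q).add_mem hy hz
      | smul z y _ hy =>
          have : g * (z • y) * g' = z • (g * y * g') := by
            rw [mul_smul_comm, smul_mul_assoc]
          rw [this]; exact (VC Q).smul_mem z hy
    exact this _ hx'
  -- the real structure Ad_g ∘ c
  refine ⟨⟨⟨fun x => g * c.toFun x * g', ?_, ?_, ?_, ?_, ?_, ?_⟩, ?_⟩, ?_⟩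
  · intro x y; rw [c.map_add']; noncomm_ring
  · intro x y
    rw [c.map_mul']
    calc g * (c.toFun x * c.toFun y) * g'
        = (g * c.toFun x) * (g' * g) * (c.toFun y * g') := by rw [hg'g]; noncomm_ring
      _ = (g * c.toFun x * g') * (g * c.toFun y * g') := by noncomm_ring
  · intro z x
    rw [c.map_smul', mul_smul_comm, smul_mul_assoc]
  · rw [c.map_one', mul_one, hgg']
  · intro x
    rw [c.map_mul', c.map_mul', hcg, hcg', c.invol]
    calc g * (g * x * g') * g' = (g * g) * x * (g' * g') := by noncomm_ring
      _ = x * ((g * g) * (g' * g')) := by rw [hsq, mul_assoc]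
      _ = x := by
          have : (g * g) * (g' * g') = 1 := by
            calc (g * g) * (g' * g') = g * (g * g') * g' := by noncomm_ring
              _ = 1 := by rw [hgg', mul_one, hgg']
          rw [this, mul_one]
  · intro x hx
    exact hstab _ (c.stable x hx)
  · intro x
    dsimp only
    rw [mul_assoc, hg'g, mul_one]
  -- uniqueness
  · intro σ
    constructor
    · rintro ⟨-, hres⟩ x
      induction x using CliffordAlgebra.induction with
      | algebraMap z =>
          have hσ : σ.toFun (algebraMap ℂ (CCl Q) z) = (starRingEnd ℂ z) • 1 := by
            rw [Algebra.algebraMap_eq_smul_one, σ.map_smul', σ.map_one']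
          rw [hσ, c_algebraMap c z, Algebra.algebraMap_eq_smul_one,
            smul_mul_assoc, one_mul, mul_smul_comm, mul_one]
      | ι m =>
          have hmem : CliffordAlgebra.ι (Q.baseChange ℂ) m ∈
              Submodule.span ℂ (Set.range (ιr Q)) := ι_mem_span m
          have : ∀ y ∈ Submodule.span ℂ (Set.range (ιr Q)),
              σ.toFun y * g = g * c.toFun y := by
            intro y hy
            induction hy using Submodule.span_induction with
            | mem y hy =>
                obtain ⟨w, rfl⟩ := hy
                rw [hres, hc, hgw]
            | zero => rw [σ.map_zero', c.map_zero', zero_mul, mul_zero]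
            | add y z _ _ hy hz =>
                rw [σ.map_add', c.map_add', add_mul, mul_add, hy, hz]
            | smul z y _ hy =>
                rw [σ.map_smul', c.map_smul', smul_mul_assoc, mul_smul_comm, hy]
          exact this _ hmem
      | mul x y hx hy =>
          rw [σ.map_mul', c.map_mul']
          calc σ.toFun x * σ.toFun y * g = σ.toFun x * (g * c.toFun y) := by rw [mul_assoc, hy]
            _ = (σ.toFun x * g) * c.toFun y := by rw [mul_assoc]
            _ = g * (c.toFun x * c.toFun y) := by rw [hx, mul_assoc]
      | add x y hx hy =>
          rw [σ.map_add', c.map_add', add_mul, mul_add, hx, hy]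
    · intro H
      have hform : ∀ x, σ.toFun x = g * c.toFun x * g' := by
        intro x
        calc σ.toFun x = σ.toFun x * (g * g') := by rw [hgg', mul_one]
          _ = (σ.toFun x * g) * g' := by rw [mul_assoc]
          _ = g * c.toFun x * g' := by rw [H]
      constructor
      · intro x
        rw [hform, hform, c.map_mul', c.map_mul', hcg, hcg', c.invol]
      · intro w
        rw [hform, hc, hgw, mul_assoc, hgg', mul_one]


lemma ir_zero : ιr Q (0 : V) = 0 := by simp [ιr, TensorProduct.tmul_zero]

lemma ir_unit (w : V) (hw : Q w ≠ 0) :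
    ∃ y : CCl Q, ιr Q w * y = 1 ∧ y * ιr Q w = 1 := by
  have hone : ((Q w : ℝ) : ℂ)⁻¹ • algebraMap ℂ (CCl Q) ((Q w : ℝ) : ℂ) = 1 := by
    rw [Algebra.algebraMap_eq_smul_one, smul_smul,
      inv_mul_cancel₀ (by exact_mod_cast hw), one_smul]
  refine ⟨((Q w : ℝ) : ℂ)⁻¹ • ιr Q w, ?_, ?_⟩
  · rw [mul_smul_comm, ir_sq]; exact hone
  · rw [smul_mul_assoc, ir_sq]; exact hone

lemma prod_sign {α : Type*} (u : CCl Q) (f : α → CCl Q) (s : α → ℂ) :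
    ∀ l : List α, (∀ x ∈ l, f x * u = s x • (u * f x)) →
      (l.map f).prod * u = (l.map s).prod • (u * (l.map f).prod)
  | [], _ => by simp
  | a :: l, h => by
      have ih := prod_sign u f s l (fun x hx => h x (List.mem_cons_of_mem a hx))
      have ha := h a List.mem_cons_self
      simp only [List.map_cons, List.prod_cons]
      rw [mul_assoc, ih, mul_smul_comm, ← mul_assoc, ha, smul_mul_assoc, smul_smul,
        mul_comm ((List.map s l).prod) (s a), mul_assoc]

lemma c_list (c : RealStructure Q) (l : List (CCl Q)) (h : ∀ x ∈ l, c.toFun x = x) :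
    c.toFun l.prod = l.prod := by
  induction l with
  | nil => exact c.map_one'
  | cons a l ih =>
      rw [List.prod_cons, c.map_mul', h a List.mem_cons_self,
        ih (fun x hx => h x (List.mem_cons_of_mem a hx))]

section Omega

variable [FiniteDimensional ℝ V] (hdim : Even (Module.finrank ℝ V))
  (e : Fin (Module.finrank ℝ V) → V)
  (he_span : Submodule.span ℝ (Set.range e) = ⊤)
  (he_orth : ∀ i j, i ≠ j → QuadraticMap.polar Q (e i) (e j) = 0)
  (hn : Module.finrank ℝ V ≠ 0)

include hdim he_orth hn in
lemma omega_anticomm_basis (j : Fin (Module.finrank ℝ V)) :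
    (List.ofFn fun i => ιr Q (e i)).prod * ιr Q (e j)
      = -(ιr Q (e j) * (List.ofFn fun i => ιr Q (e i)).prod) := by
  have hcom : ∀ i ∈ List.finRange (Module.finrank ℝ V),
      (fun i => ιr Q (e i)) i * ιr Q (e j)
        = (fun i => if i = j then (1 : ℂ) else -1) i • (ιr Q (e j) * (fun i => ιr Q (e i)) i) := by
    intro i _
    dsimp only
    by_cases hij : i = j
    · subst hij; rw [if_pos rfl, one_smul]
    · rw [if_neg hij, neg_one_smul]
      have h2 := ir_anticomm (Q := Q) (e j) (e i)
      rw [he_orth j i (fun hji => hij hji.symm)] at h2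
      simp only [Complex.ofReal_zero, map_zero] at h2
      exact eq_neg_of_add_eq_zero_right h2
  have key := prod_sign (ιr Q (e j)) (fun i => ιr Q (e i))
    (fun i => if i = j then (1 : ℂ) else -1) (List.finRange (Module.finrank ℝ V)) hcom
  have hs : ((List.finRange (Module.finrank ℝ V)).map
      (fun i => if i = j then (1 : ℂ) else -1)).prod = -1 := by
    rw [← List.ofFn_eq_map, List.prod_ofFn]
    rw [← Finset.mul_prod_erase Finset.univ _ (Finset.mem_univ j)]
    simp only [if_pos rfl, one_mul]
    rw [Finset.prod_congr rfl (fun i hi => if_neg (Finset.mem_erase.mp hi).1),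
      Finset.prod_const, Finset.card_erase_of_mem (Finset.mem_univ j),
      Finset.card_univ, Fintype.card_fin]
    have hodd : Odd (Module.finrank ℝ V - 1) :=
      Nat.Even.sub_odd (Nat.one_le_iff_ne_zero.mpr hn) hdim odd_one
    rw [hodd.neg_one_pow]
    simp
  rw [List.ofFn_eq_map (f := fun i => ιr Q (e i)), key, hs, neg_one_smul]

include hdim he_span he_orth hn in
lemma omega_anticomm (u : V) :
    (List.ofFn fun i => ιr Q (e i)).prod * ιr Q u
      = -(ιr Q u * (List.ofFn fun i => ιr Q (e i)).prod) := by
  set ω := (List.ofFn fun i => ιr Q (e i)).prod with hω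
  have hu : u ∈ Submodule.span ℝ (Set.range e) := by rw [he_span]; exact Submodule.mem_top
  suffices h : ω * ιr Q u + ιr Q u * ω = 0 by
    have := eq_neg_of_add_eq_zero_left h
    rw [this]
  clear hω
  induction hu using Submodule.span_induction with
  | mem x hx =>
      obtain ⟨i, rfl⟩ := hx
      rw [omega_anticomm_basis hdim e he_orth hn i]
      exact neg_add_cancel _
  | zero => rw [ir_zero]; simp
  | add x y _ _ hx hy =>
      rw [ir_add, mul_add, add_mul]
      calc ω * ιr Q x + ω * ιr Q y + (ιr Q x * ω + ιr Q y * ω)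
          = (ω * ιr Q x + ιr Q x * ω) + (ω * ιr Q y + ιr Q y * ω) := by abel
        _ = 0 := by rw [hx, hy, add_zero]
  | smul r x _ hx =>
      rw [ir_smul, mul_smul_comm, smul_mul_assoc]
      have h3 : r • (ω * ιr Q x + ιr Q x * ω) = 0 := by rw [hx]; exact smul_zero r
      exact (smul_add r _ _).symm.trans h3

end Omega

end Aux

/-- Let `v ∈ V` with `Q(v) ≠ 0`, `L = ℝv`, `s_L` the `Q`-orthogonal
symmetry with respect to `L`, and `ω` the volume element. Then `Ad_v ∘ c` is the unique
admissible real structure restricting to `s_L` on `V`, and `Ad_{ωv} ∘ c` is the unique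
admissible real structure restricting to `−s_L` on `V`. -/
theorem statement15 [FiniteDimensional ℝ V] (Q : QuadraticForm ℝ V)
    (hdim : Even (Module.finrank ℝ V)) (hQ : QFNondeg Q)
    (c : RealStructure Q) (hc : IsCanonicalC c)
    (v : V) (hv : Q v ≠ 0)
    -- s_L : the Q-orthogonal symmetry with respect to the line L = ℝv
    (sL : V →ₗ[ℝ] V) (hsLv : sL v = v)
    (hsLperp : ∀ w : V, QuadraticMap.polar Q v w = 0 → sL w = -w)
    -- (e i) is a pseudo-orthonormal basis of V and ω the associated volume element
    (e : Fin (Module.finrank ℝ V) → V)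
    (he_indep : LinearIndependent ℝ e)
    (he_span : Submodule.span ℝ (Set.range e) = ⊤)
    (he_orth : ∀ i j, i ≠ j → QuadraticMap.polar Q (e i) (e j) = 0)
    (he_unit : ∀ i, Q (e i) = 1 ∨ Q (e i) = -1) :
    -- Ad_v ∘ c is a real structure…
    (∃ σ : RealStructure Q, ∀ x, σ.toFun x * ιr Q v = ιr Q v * c.toFun x)
    -- …and it is the unique admissible real structure restricting to s_L on V
    ∧ (∀ σ : RealStructure Q,
        (Admissible c σ ∧ ∀ w : V, σ.toFun (ιr Q w) = ιr Q (sL w))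
          ↔ (∀ x, σ.toFun x * ιr Q v = ιr Q v * c.toFun x))
    -- Ad_{ωv} ∘ c is a real structure…
    ∧ (∃ σ : RealStructure Q, ∀ x,
        σ.toFun x * ((List.ofFn fun i => ιr Q (e i)).prod * ιr Q v)
          = ((List.ofFn fun i => ιr Q (e i)).prod * ιr Q v) * c.toFun x)
    -- …and it is the unique admissible real structure restricting to −s_L on V
    ∧ (∀ σ : RealStructure Q,
        (Admissible c σ ∧ ∀ w : V, σ.toFun (ιr Q w) = -ιr Q (sL w))
          ↔ (∀ x, σ.toFun x * ((List.ofFn fun i => ιr Q (e i)).prod * ιr Q v)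
              = ((List.ofFn fun i => ιr Q (e i)).prod * ιr Q v) * c.toFun x)) := by
  classical
  have hinv : ∀ w, sL (sL w) = w := Aux.sL_invol v hv sL hsLv hsLperp
  have hkey : ∀ w, ιr Q v * ιr Q w = ιr Q (sL w) * ιr Q v :=
    Aux.key_comm v hv sL hsLv hsLperp
  obtain ⟨y, hy1, hy2⟩ := Aux.ir_unit v hv
  have frame1 := Aux.frame c hc (ιr Q v) y hy1 hy2 (hc v) sL hinv hkey
  have hn : Module.finrank ℝ V ≠ 0 := by
    intro h0
    have hsub : Subsingleton V := Module.finrank_zero_iff.mp h0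
    exact hv (by rw [Subsingleton.elim v 0]; simp)
  set ω := (List.ofFn fun i => ιr Q (e i)).prod with hω
  have hωanti : ∀ u : V, ω * ιr Q u = -(ιr Q u * ω) := fun u =>
    Aux.omega_anticomm hdim e he_span he_orth hn u
  have hωunit : IsUnit ω := by
    apply List.prod_isUnit
    intro m hm
    rw [List.mem_ofFn] at hm
    obtain ⟨i, rfl⟩ := hm
    have hQi : Q (e i) ≠ 0 := by rcases he_unit i with h | h <;> rw [h] <;> norm_num
    obtain ⟨z, hz1, hz2⟩ := Aux.ir_unit (e i) hQi
    exact ⟨⟨ιr Q (e i), z, hz1, hz2⟩, rfl⟩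
  have hvunit : IsUnit (ιr Q v) := ⟨⟨ιr Q v, y, hy1, hy2⟩, rfl⟩
  obtain ⟨u2, hu2⟩ := hωunit.mul hvunit
  have hcω : c.toFun (ω * ιr Q v) = ω * ιr Q v := by
    rw [c.map_mul', hc]
    congr 1
    apply Aux.c_list
    intro x hx
    rw [List.mem_ofFn] at hx
    obtain ⟨i, rfl⟩ := hx
    exact hc (e i)
  have ht2 : ∀ w : V, -(sL (-(sL w))) = w := fun w => by rw [map_neg, neg_neg, hinv]
  have hgw2 : ∀ w, (ω * ιr Q v) * ιr Q w = ιr Q (-(sL w)) * (ω * ιr Q v) := by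
    intro w
    rw [mul_assoc, hkey w, ← mul_assoc, hωanti (sL w), Aux.ir_neg]
    noncomm_ring
  have frame2 := Aux.frame c hc (ω * ιr Q v) ↑u2⁻¹
    (by rw [← hu2]; exact u2.mul_inv) (by rw [← hu2]; exact u2.inv_mul)
    hcω (fun w => -(sL w)) ht2 hgw2
  refine ⟨frame1.1, frame1.2, frame2.1, ?_⟩
  intro σ
  have h := frame2.2 σ
  constructor
  · rintro ⟨h1, h2⟩
    exact h.mp ⟨h1, fun w => by rw [h2 w, ← Aux.ir_neg]⟩
  · intro H
    obtain ⟨h1, h2⟩ := h.mpr H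
    exact ⟨h1, fun w => by rw [h2 w, Aux.ir_neg]⟩
end
end
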